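/- arXiv:math/0104004 — 2 statements merged into one kernel-verified Lean document; each statement's English description precedes it below -/
import Mathlib

section
/- Let (𝒜, φ) be a non-commutative probability space with free cumulants k_n. For n ≥ 2, a₁,...,a_n ∈ 𝒜 and 1 ≤ p ≤ n−1: k_{n−1}(a₁,...,a_{p−1}, a_p·a_{p+1}, a_{p+2},...,a_n) = k_n(a₁,...,a_n) + Σ_{π ∈ NC(n), #π = 2, p ≁_π p+1} k_π[a₁,...,a_n]. -/
open scoped Classical


open scoped Classical

def NoCrossing {N : ℕ} (π : Finset (Finset (Fin N))) : Prop :=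
  ¬ ∃ p1 q1 p2 q2 : Fin N, p1 < q1 ∧ q1 < p2 ∧ p2 < q2 ∧
      (∃ V ∈ π, p1 ∈ V ∧ p2 ∈ V) ∧ (∃ W ∈ π, q1 ∈ W ∧ q2 ∈ W) ∧
      ¬(∃ V ∈ π, p1 ∈ V ∧ q1 ∈ V)

def IsPartition {N : ℕ} (π : Finset (Finset (Fin N))) : Prop :=
  (∀ V ∈ π, V.Nonempty) ∧ ∀ i : Fin N, ∃! V, V ∈ π ∧ i ∈ V

noncomputable def NCPartitions (N : ℕ) : Finset (Finset (Finset (Fin N))) :=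
  Finset.univ.filter fun π => IsPartition π ∧ NoCrossing π

noncomputable def cumProd {A : Type*} [Ring A] (k : ∀ n : ℕ, (Fin n → A) → ℂ)
    {N : ℕ} (π : Finset (Finset (Fin N))) (a : Fin N → A) : ℂ :=
  ∏ V ∈ π, k V.card (fun i => a (V.orderEmbOfFin rfl i))

def MomentCumulant {A : Type*} [Ring A] [Algebra ℂ A] (φ : A →ₗ[ℂ] ℂ)
    (k : ∀ n : ℕ, (Fin n → A) → ℂ) : Prop :=
  ∀ (N : ℕ) (a : Fin N → A), φ (List.ofFn a).prod = ∑ π ∈ NCPartitions N, cumProd k π a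

def FreeFamily {A : Type*} [Ring A] [Algebra ℂ A] (φ : A →ₗ[ℂ] ℂ)
    {ι : Type*} (S : ι → Subalgebra ℂ A) : Prop :=
  ∀ (len : ℕ) (a : Fin len → A) (j : Fin len → ι),
    (∀ i, a i ∈ S (j i)) →
    (∀ (i : ℕ) (h1 : i + 1 < len), j ⟨i, by omega⟩ ≠ j ⟨i + 1, h1⟩) →
    (∀ i, φ (a i) = 0) →
    φ (List.ofFn a).prod = 0

section Basics

variable {A : Type*} [Ring A]

theorem kcongr (k : ∀ n : ℕ, (Fin n → A) → ℂ) {m₁ m₂ : ℕ} (h : m₁ = m₂)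
    {f₁ : Fin m₁ → A} {f₂ : Fin m₂ → A} (hf : ∀ i : Fin m₁, f₁ i = f₂ (Fin.cast h i)) :
    k m₁ f₁ = k m₂ f₂ := by
  subst h
  congr 1
  funext i
  simpa using hf i

/-- the block of `j` in `π` -/
noncomputable def blk {N : ℕ} (π : Finset (Finset (Fin N))) (j : Fin N) : Finset (Fin N) :=
  π.biUnion fun V => if j ∈ V then V else ∅

theorem mem_blk {N : ℕ} {π : Finset (Finset (Fin N))} {j x : Fin N} :
    x ∈ blk π j ↔ ∃ V ∈ π, j ∈ V ∧ x ∈ V := by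
  simp only [blk, Finset.mem_biUnion]
  constructor
  · rintro ⟨V, hV, hx⟩
    by_cases h : j ∈ V
    · exact ⟨V, hV, h, by simpa [h] using hx⟩
    · simp [h] at hx
  · rintro ⟨V, hV, hj, hx⟩
    exact ⟨V, hV, by simp [hj, hx]⟩

theorem blk_eq {N : ℕ} {π : Finset (Finset (Fin N))} (hπ : IsPartition π)
    {j : Fin N} {V : Finset (Fin N)} (hV : V ∈ π) (hj : j ∈ V) : blk π j = V := by
  obtain ⟨W, ⟨hW, hjW⟩, hun⟩ := hπ.2 j
  have hVW : V = W := hun V ⟨hV, hj⟩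
  subst hVW
  ext x
  rw [mem_blk]
  constructor
  · rintro ⟨V', hV', hj', hx'⟩
    rwa [hun V' ⟨hV', hj'⟩] at hx'
  · intro hx
    exact ⟨V, hV, hj, hx⟩

theorem blk_mem {N : ℕ} {π : Finset (Finset (Fin N))} (hπ : IsPartition π) (j : Fin N) :
    blk π j ∈ π ∧ j ∈ blk π j := by
  obtain ⟨W, ⟨hW, hjW⟩, _⟩ := hπ.2 j
  rw [blk_eq hπ hW hjW]
  exact ⟨hW, hjW⟩

theorem part_disj {N : ℕ} {π : Finset (Finset (Fin N))} (hπ : IsPartition π)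
    {V W : Finset (Fin N)} (hV : V ∈ π) (hW : W ∈ π) {x : Fin N}
    (hxV : x ∈ V) (hxW : x ∈ W) : V = W := by
  obtain ⟨Z, _, hun⟩ := hπ.2 x
  rw [hun V ⟨hV, hxV⟩, hun W ⟨hW, hxW⟩]

/-- In a noncrossing partition, if a point of `W` lies strictly between two points
of a different block `V`, then all points of `W` do. -/
theorem straddle {N : ℕ} {π : Finset (Finset (Fin N))} (hπ : IsPartition π)
    (hnc : NoCrossing π) {V W : Finset (Fin N)} (hV : V ∈ π) (hW : W ∈ π) (hVW : V ≠ W)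
    {v1 v2 w : Fin N} (hv1 : v1 ∈ V) (hv2 : v2 ∈ V) (hw : w ∈ W)
    (h1 : v1 < w) (h2 : w < v2) {w' : Fin N} (hw' : w' ∈ W) : v1 < w' ∧ w' < v2 := by
  have hnot : ¬(∃ Z ∈ π, v1 ∈ Z ∧ w ∈ Z) := by
    rintro ⟨Z, hZ, h1', h2'⟩
    exact hVW ((part_disj hπ hV hZ hv1 h1').trans (part_disj hπ hZ hW h2' hw))
  have hnotw : ¬(∃ Z ∈ π, w' ∈ Z ∧ v1 ∈ Z) := by
    rintro ⟨Z, hZ, h1', h2'⟩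
    exact hVW ((part_disj hπ hV hZ hv1 h2').trans (part_disj hπ hZ hW h1' hw'))
  constructor
  · by_contra hlt
    push_neg at hlt
    have hne : w' ≠ v1 := by
      rintro rfl
      exact hVW (part_disj hπ hV hW hv1 hw')
    have : w' < v1 := lt_of_le_of_ne hlt hne
    exact hnc ⟨w', v1, w, v2, this, h1, h2, ⟨W, hW, hw', hw⟩, ⟨V, hV, hv1, hv2⟩, hnotw⟩
  · by_contra hlt
    push_neg at hlt
    have hne : w' ≠ v2 := by
      rintro rfl
      exact hVW (part_disj hπ hV hW hv2 hw')
    have : v2 < w' := lt_of_le_of_ne hlt (Ne.symm hne)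
    exact hnc ⟨v1, w, v2, w', h1, h2, this, ⟨V, hV, hv1, hv2⟩, ⟨W, hW, hw, hw'⟩, hnot⟩

theorem top_noCrossing (N : ℕ) : NoCrossing ({Finset.univ} : Finset (Finset (Fin N))) := by
  rintro ⟨p1, q1, p2, q2, _, _, _, _, _, hne⟩
  exact hne ⟨Finset.univ, Finset.mem_singleton_self _, Finset.mem_univ _, Finset.mem_univ _⟩

theorem top_mem_NCP (N : ℕ) (hN : 0 < N) :
    ({Finset.univ} : Finset (Finset (Fin N))) ∈ NCPartitions N := by
  rw [NCPartitions, Finset.mem_filter]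
  refine ⟨Finset.mem_univ _, ?_, top_noCrossing N⟩
  constructor
  · intro V hV
    simp only [Finset.mem_singleton] at hV
    subst hV
    exact ⟨⟨0, hN⟩, Finset.mem_univ _⟩
  · intro i
    exact ⟨Finset.univ, ⟨Finset.mem_singleton_self _, Finset.mem_univ _⟩, by simp⟩

theorem univ_orderEmbOfFin_apply {N : ℕ} (h : (Finset.univ : Finset (Fin N)).card = N)
    (i : Fin (Finset.univ : Finset (Fin N)).card) :
    (Finset.univ : Finset (Fin N)).orderEmbOfFin rfl i = Fin.cast h i := by
  have := Finset.orderEmbOfFin_unique (s := (Finset.univ : Finset (Fin N))) rfl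
    (f := fun i => (Fin.cast h i : Fin N)) (fun x => Finset.mem_univ _)
    (fun x y hxy => hxy)
  exact (congrFun this i).symm

theorem cumProd_top (k : ∀ n : ℕ, (Fin n → A) → ℂ) {N : ℕ} (x : Fin N → A) :
    cumProd k ({Finset.univ} : Finset (Finset (Fin N))) x = k N x := by
  rw [cumProd, Finset.prod_singleton]
  exact kcongr k (by simp) fun i => by rw [univ_orderEmbOfFin_apply]

/-- orderEmbOfFin of an image under a strictly monotone map -/
theorem image_orderEmbOfFin {α β : Type*} [LinearOrder α] [LinearOrder β] [DecidableEq β]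
    {g : α → β} (hg : StrictMono g) (s : Finset α) {m : ℕ} (h : s.card = m)
    (h' : (s.image g).card = m) (i : Fin m) :
    (s.image g).orderEmbOfFin h' i = g (s.orderEmbOfFin h i) := by
  have := Finset.orderEmbOfFin_unique (s := s.image g) h'
    (f := fun i => g (s.orderEmbOfFin h i))
    (fun x => Finset.mem_image_of_mem g (Finset.orderEmbOfFin_mem s h x))
    (hg.comp (s.orderEmbOfFin h).strictMono)
  exact (congrFun this i).symm

end Basics

set_option linter.unusedSectionVars false

section Maps

variable {n : ℕ}

/-- embedding of `Fin n` into `Fin (n+1)` skipping `p+1` -/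
def eMap (p : Fin n) : Fin n → Fin (n + 1) := fun i =>
  if h : (i : ℕ) ≤ (p : ℕ) then ⟨i, by have := i.isLt; omega⟩ else ⟨(i : ℕ) + 1, by have := i.isLt; omega⟩

/-- collapse of `Fin (n+1)` onto `Fin n` identifying `p` and `p+1` -/
def cMap (p : Fin n) : Fin (n + 1) → Fin n := fun j =>
  if h : (j : ℕ) ≤ (p : ℕ) then ⟨j, by have := p.isLt; omega⟩
  else ⟨(j : ℕ) - 1, by have := j.isLt; have := p.isLt; omega⟩

theorem eMap_val (p : Fin n) (i : Fin n) :
    ((eMap p i : Fin (n+1)) : ℕ) = if (i : ℕ) ≤ (p : ℕ) then (i : ℕ) else (i : ℕ) + 1 := by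
  rw [eMap]; split_ifs <;> rfl

theorem cMap_val (p : Fin n) (j : Fin (n+1)) :
    ((cMap p j : Fin n) : ℕ) = if (j : ℕ) ≤ (p : ℕ) then (j : ℕ) else (j : ℕ) - 1 := by
  rw [cMap]; split_ifs <;> rfl

theorem eMap_strictMono (p : Fin n) : StrictMono (eMap p) := by
  intro i j hij
  have h1 := eMap_val p i
  have h2 := eMap_val p j
  rw [Fin.lt_def] at *
  split_ifs at h1 h2 <;> omega

theorem cMap_eMap (p : Fin n) (i : Fin n) : cMap p (eMap p i) = i := by
  have h1 := eMap_val p i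
  have h2 := cMap_val p (eMap p i)
  apply Fin.ext
  split_ifs at h1 h2 <;> omega

theorem eMap_cMap (p : Fin n) {j : Fin (n+1)} (hj : j ≠ p.succ) : eMap p (cMap p j) = j := by
  have hjv : (j : ℕ) ≠ (p : ℕ) + 1 := fun h => hj (Fin.ext (by simp [h]))
  have h1 := cMap_val p j
  have h2 := eMap_val p (cMap p j)
  apply Fin.ext
  split_ifs at h1 h2 <;> omega

theorem cMap_mono (p : Fin n) : Monotone (cMap p) := by
  intro i j hij
  have h1 := cMap_val p i
  have h2 := cMap_val p j
  rw [Fin.le_def] at *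
  split_ifs at h1 h2 <;> omega

theorem cMap_reflect (p : Fin n) {i j : Fin (n+1)} (h : cMap p i < cMap p j) : i < j := by
  by_contra hle
  push_neg at hle
  exact absurd (cMap_mono p hle) (not_le.2 h)

theorem cMap_castSucc (p : Fin n) : cMap p p.castSucc = p := by
  apply Fin.ext
  have := cMap_val p p.castSucc
  simp only [Fin.coe_castSucc] at this
  simpa using this

theorem cMap_succ (p : Fin n) : cMap p p.succ = p := by
  apply Fin.ext
  have := cMap_val p p.succ
  simp only [Fin.val_succ] at this
  rw [this]
  simp

theorem eMap_ne_succ (p : Fin n) (i : Fin n) : eMap p i ≠ p.succ := by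
  intro h
  have h1 := eMap_val p i
  have : ((eMap p i : Fin (n+1)) : ℕ) = (p : ℕ) + 1 := by rw [h]; simp
  split_ifs at h1 <;> omega

theorem cMap_eq (p : Fin n) {i j : Fin (n+1)} (h : cMap p i = cMap p j) :
    i = j ∨ ((i : ℕ) = (p : ℕ) ∧ (j : ℕ) = (p : ℕ) + 1) ∨
      ((j : ℕ) = (p : ℕ) ∧ (i : ℕ) = (p : ℕ) + 1) := by
  have h1 := cMap_val p i
  have h2 := cMap_val p j
  have hv : ((cMap p i : Fin n) : ℕ) = ((cMap p j : Fin n) : ℕ) := by rw [h]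
  by_cases hij : i = j
  · exact Or.inl hij
  · have : (i : ℕ) ≠ (j : ℕ) := fun hh => hij (Fin.ext hh)
    right
    split_ifs at h1 h2 <;> omega

/-- lift of a subset of `Fin n` to `Fin (n+1)` -/
noncomputable def LS (p : Fin n) (V : Finset (Fin n)) : Finset (Fin (n + 1)) :=
  Finset.univ.filter fun j => cMap p j ∈ V

theorem mem_LS {p : Fin n} {V : Finset (Fin n)} {j : Fin (n+1)} :
    j ∈ LS p V ↔ cMap p j ∈ V := by simp [LS]

theorem LS_injective (p : Fin n) : Function.Injective (LS p) := by
  intro V W h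
  ext i
  constructor
  · intro hi
    have : eMap p i ∈ LS p V := mem_LS.2 (by rwa [cMap_eMap])
    rw [h, mem_LS, cMap_eMap] at this
    exact this
  · intro hi
    have : eMap p i ∈ LS p W := mem_LS.2 (by rwa [cMap_eMap])
    rw [← h, mem_LS, cMap_eMap] at this
    exact this

theorem LS_of_not_mem {p : Fin n} {W : Finset (Fin n)} (hp : p ∉ W) :
    LS p W = W.image (eMap p) := by
  ext j
  rw [mem_LS, Finset.mem_image]
  constructor
  · intro hj
    refine ⟨cMap p j, hj, eMap_cMap p ?_⟩
    intro hjp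
    rw [hjp, cMap_succ] at hj
    exact hp hj
  · rintro ⟨i, hi, rfl⟩
    rwa [cMap_eMap]

theorem LS_of_mem {p : Fin n} {V : Finset (Fin n)} (hp : p ∈ V) :
    LS p V = insert p.succ (V.image (eMap p)) := by
  ext j
  rw [mem_LS, Finset.mem_insert, Finset.mem_image]
  constructor
  · intro hj
    by_cases hjp : j = p.succ
    · exact Or.inl hjp
    · exact Or.inr ⟨cMap p j, hj, eMap_cMap p hjp⟩
  · rintro (rfl | ⟨i, hi, rfl⟩)
    · rwa [cMap_succ]
    · rwa [cMap_eMap]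

theorem LS_univ (p : Fin n) : LS p Finset.univ = Finset.univ := by
  ext j; simp [mem_LS]

theorem card_LS_of_mem {p : Fin n} {V : Finset (Fin n)} (hp : p ∈ V) :
    (LS p V).card = V.card + 1 := by
  rw [LS_of_mem hp, Finset.card_insert_of_notMem, Finset.card_image_of_injective _
    (eMap_strictMono p).injective]
  rw [Finset.mem_image]
  rintro ⟨i, _, hi⟩
  exact eMap_ne_succ p i hi

/-- merge the blocks of `p` and `p+1` -/
noncomputable def Mrg (p : Fin n) (π : Finset (Finset (Fin (n+1)))) :
    Finset (Finset (Fin (n+1))) :=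
  (π \ {blk π p.castSucc, blk π p.succ}) ∪ {blk π p.castSucc ∪ blk π p.succ}

/-- collapse a partition of `Fin (n+1)` to one of `Fin n` -/
noncomputable def Cls (p : Fin n) (π : Finset (Finset (Fin (n+1)))) :
    Finset (Finset (Fin n)) :=
  (Mrg p π).image fun B => B.image (cMap p)

/-- lift a partition of `Fin n` to `Fin (n+1)` -/
noncomputable def Lft (p : Fin n) (π : Finset (Finset (Fin n))) :
    Finset (Finset (Fin (n+1))) :=
  π.image (LS p)

end Maps

section Merge

variable {n : ℕ} (p : Fin n) {π : Finset (Finset (Fin (n+1)))}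

theorem mem_Mrg {Z : Finset (Fin (n+1))} :
    Z ∈ Mrg p π ↔ (Z ∈ π ∧ Z ≠ blk π p.castSucc ∧ Z ≠ blk π p.succ) ∨
      Z = blk π p.castSucc ∪ blk π p.succ := by
  simp only [Mrg, Finset.mem_union, Finset.mem_sdiff, Finset.mem_insert,
    Finset.mem_singleton]
  tauto

theorem U_mem_Mrg : blk π p.castSucc ∪ blk π p.succ ∈ Mrg p π :=
  (mem_Mrg p).2 (Or.inr rfl)

theorem Mrg_isPartition (hπ : IsPartition π) : IsPartition (Mrg p π) := by
  constructor
  · intro Z hZ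
    rcases (mem_Mrg p).1 hZ with ⟨hZπ, _, _⟩ | rfl
    · exact hπ.1 Z hZπ
    · exact ⟨p.castSucc, Finset.mem_union_left _ (blk_mem hπ p.castSucc).2⟩
  · intro j
    by_cases hw : blk π j = blk π p.castSucc ∨ blk π j = blk π p.succ
    · refine ⟨blk π p.castSucc ∪ blk π p.succ, ⟨U_mem_Mrg p, ?_⟩, ?_⟩
      · rcases hw with h | h
        · exact Finset.mem_union_left _ (h ▸ (blk_mem hπ j).2)
        · exact Finset.mem_union_right _ (h ▸ (blk_mem hπ j).2)
      · rintro Z ⟨hZ, hjZ⟩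
        rcases (mem_Mrg p).1 hZ with ⟨hZπ, h0, h1⟩ | h
        · exfalso
          have := blk_eq hπ hZπ hjZ
          rcases hw with h | h
          · exact h0 (this ▸ h)
          · exact h1 (this ▸ h)
        · exact h
    · push_neg at hw
      refine ⟨blk π j, ⟨(mem_Mrg p).2 (Or.inl ⟨(blk_mem hπ j).1, hw.1, hw.2⟩),
        (blk_mem hπ j).2⟩, ?_⟩
      rintro Z ⟨hZ, hjZ⟩
      rcases (mem_Mrg p).1 hZ with ⟨hZπ, _, _⟩ | rfl
      · exact (blk_eq hπ hZπ hjZ).symm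
      · exfalso
        rcases Finset.mem_union.1 hjZ with h | h
        · exact hw.1 (blk_eq hπ (blk_mem hπ p.castSucc).1 h)
        · exact hw.2 (blk_eq hπ (blk_mem hπ p.succ).1 h)

/-- every element of the merged block has a "partner" in its own `π`-block whose
value is `p` or `p+1`. -/
theorem partner (hπ : IsPartition π) {z : Fin (n+1)} (hz : z ∈ blk π p.castSucc ∪ blk π p.succ) :
    ∃ S w, S ∈ π ∧ z ∈ S ∧ w ∈ S ∧ ((w : ℕ) = (p : ℕ) ∨ (w : ℕ) = (p : ℕ) + 1) ∧
      (S = blk π p.castSucc ∨ S = blk π p.succ) := by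
  rcases Finset.mem_union.1 hz with h | h
  · exact ⟨blk π p.castSucc, p.castSucc, (blk_mem hπ _).1, h, (blk_mem hπ _).2,
      Or.inl (by simp), Or.inl rfl⟩
  · exact ⟨blk π p.succ, p.succ, (blk_mem hπ _).1, h, (blk_mem hπ _).2,
      Or.inr (by simp), Or.inr rfl⟩

theorem not_mem_U_val (hπ : IsPartition π) {z : Fin (n+1)} (hz : z ∉ blk π p.castSucc ∪ blk π p.succ) :
    (z : ℕ) < (p : ℕ) ∨ (p : ℕ) + 1 < (z : ℕ) := by
  have h0 : z ≠ p.castSucc := by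
    rintro rfl
    exact hz (Finset.mem_union_left _ (blk_mem hπ _).2)
  have h1 : z ≠ p.succ := by
    rintro rfl
    exact hz (Finset.mem_union_right _ (blk_mem hπ _).2)
  have hv0 : (z : ℕ) ≠ (p : ℕ) := fun h => h0 (Fin.ext (by simpa using h))
  have hv1 : (z : ℕ) ≠ (p : ℕ) + 1 := fun h => h1 (Fin.ext (by simpa using h))
  omega

theorem Mrg_noCrossing (hπ : IsPartition π) (hnc : NoCrossing π) : NoCrossing (Mrg p π) := by
  have hMP := Mrg_isPartition p hπ
  rintro ⟨x1, y1, x2, y2, h12, h23, h34, ⟨X, hX, hx1, hx2⟩, ⟨Y, hY, hy1, hy2⟩, hsep⟩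
  set U := blk π p.castSucc ∪ blk π p.succ with hUdef
  have hXY : X ≠ Y := by
    rintro rfl
    exact hsep ⟨X, hX, hx1, hy1⟩
  by_cases hXU : X = U
  · subst hXU
    by_cases hYU : Y = U
    · exact hXY hYU.symm
    rcases (mem_Mrg p).1 hY with ⟨hYπ, hY0, hY1⟩ | h
    swap; · exact absurd h hYU
    -- partner blocks for x1, x2
    obtain ⟨S, zs, hSπ, hx1S, hzsS, hzsv, hS01⟩ := partner p hπ hx1
    obtain ⟨T, zt, hTπ, hx2T, hztT, hztv, hT01⟩ := partner p hπ hx2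
    have hSY : S ≠ Y := by rintro rfl; rcases hS01 with h | h <;> [exact hY0 h; exact hY1 h]
    have hTY : T ≠ Y := by rintro rfl; rcases hT01 with h | h <;> [exact hY0 h; exact hY1 h]
    by_cases hST : S = T
    · -- x1, x2 in the same π block: direct crossing in π
      refine hnc ⟨x1, y1, x2, y2, h12, h23, h34, ⟨S, hSπ, hx1S, hST ▸ hx2T⟩,
        ⟨Y, hYπ, hy1, hy2⟩, ?_⟩
      rintro ⟨V, hV, h1, h2⟩
      have := part_disj hπ hV hSπ h1 hx1S
      subst this
      exact hsep ⟨U, U_mem_Mrg p, hx1, by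
        rcases hS01 with h | h
        · exact Finset.mem_union_left _ (h ▸ h2)
        · exact Finset.mem_union_right _ (h ▸ h2)⟩
    · have hy1U : y1 ∉ U := fun h => hYU (part_disj hMP hY (U_mem_Mrg p) hy1 h)
      have hy2U : y2 ∉ U := fun h => hYU (part_disj hMP hY (U_mem_Mrg p) hy2 h)
      have hy1v := not_mem_U_val p hπ hy1U
      have hy2v := not_mem_U_val p hπ hy2U
      rcases hy1v with hy1v | hy1v
      · -- y1 below p : S-pair (x1, zs) straddles y1
        have h1 : y1 < zs := by rw [Fin.lt_def]; omega
        obtain ⟨hA, hB⟩ := straddle hπ hnc hSπ hYπ hSY hx1S hzsS hy1 h12 h1 hy2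
        -- now y2 < zs ≤ p+1, so y2 < p
        have hy2p : (y2 : ℕ) < (p : ℕ) := by
          have := hB
          rw [Fin.lt_def] at this
          omega
        have h2 : y2 < zt := by rw [Fin.lt_def]; omega
        obtain ⟨hC, _⟩ := straddle hπ hnc hTπ hYπ hTY hx2T hztT hy2 h34 h2 hy1
        exact absurd hC (not_lt.2 h23.le)
      · -- y1 above p+1 : T-pair (zt, x2) straddles y1
        have h1 : zt < y1 := by rw [Fin.lt_def]; omega
        obtain ⟨_, hB⟩ := straddle hπ hnc hTπ hYπ hTY hztT hx2T hy1 h1 h23 hy2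
        exact absurd hB (not_lt.2 h34.le)
  · by_cases hYU : Y = U
    · subst hYU
      rcases (mem_Mrg p).1 hX with ⟨hXπ, hX0, hX1⟩ | h
      swap; · exact absurd h hXU
      obtain ⟨S, zs, hSπ, hy1S, hzsS, hzsv, hS01⟩ := partner p hπ hy1
      obtain ⟨T, zt, hTπ, hy2T, hztT, hztv, hT01⟩ := partner p hπ hy2
      have hSX : S ≠ X := by rintro rfl; rcases hS01 with h | h <;> [exact hX0 h; exact hX1 h]
      have hTX : T ≠ X := by rintro rfl; rcases hT01 with h | h <;> [exact hX0 h; exact hX1 h]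
      by_cases hST : S = T
      · refine hnc ⟨x1, y1, x2, y2, h12, h23, h34, ⟨X, hXπ, hx1, hx2⟩,
          ⟨S, hSπ, hy1S, hST ▸ hy2T⟩, ?_⟩
        rintro ⟨V, hV, h1, h2⟩
        have := part_disj hπ hV hSπ h2 hy1S
        subst this
        refine hsep ⟨U, U_mem_Mrg p, ?_, hy1⟩
        rcases hS01 with h | h
        · exact Finset.mem_union_left _ (h ▸ h1)
        · exact Finset.mem_union_right _ (h ▸ h1)
      · have hx1U : x1 ∉ U := fun h => hXU (part_disj hMP hX (U_mem_Mrg p) hx1 h)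
        have hx2U : x2 ∉ U := fun h => hXU (part_disj hMP hX (U_mem_Mrg p) hx2 h)
        have hx1v := not_mem_U_val p hπ hx1U
        have hx2v := not_mem_U_val p hπ hx2U
        rcases hx2v with hx2v | hx2v
        · -- x2 below p : S-pair (y1, zs) straddles x2
          have h1 : x2 < zs := by rw [Fin.lt_def]; omega
          obtain ⟨hA, _⟩ := straddle hπ hnc hSπ hXπ hSX hy1S hzsS hx2 h23 h1 hx1
          exact absurd hA (not_lt.2 h12.le)
        · -- x2 above p+1 : T-pair (zt, y2) straddles x2
          have h1 : zt < x2 := by rw [Fin.lt_def]; omega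
          obtain ⟨hA, _⟩ := straddle hπ hnc hTπ hXπ hTX hztT hy2T hx2 h1 h34 hx1
          -- zt < x1, i.e. x1 val > p at least; combine with case on x1
          rcases hx1v with hx1v | hx1v
          · rw [Fin.lt_def] at hA; omega
          · -- x1 above p+1 : S-pair (zs, y1) straddles x1
            have h2 : zs < x1 := by rw [Fin.lt_def]; omega
            obtain ⟨_, hB⟩ := straddle hπ hnc hSπ hXπ hSX hzsS hy1S hx1 h2 h12 hx2
            exact absurd hB (not_lt.2 h23.le)
    · rcases (mem_Mrg p).1 hX with ⟨hXπ, _, _⟩ | h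
      swap; · exact absurd h hXU
      rcases (mem_Mrg p).1 hY with ⟨hYπ, _, _⟩ | h
      swap; · exact absurd h hYU
      refine hnc ⟨x1, y1, x2, y2, h12, h23, h34, ⟨X, hXπ, hx1, hx2⟩, ⟨Y, hYπ, hy1, hy2⟩, ?_⟩
      rintro ⟨V, hV, h1, h2⟩
      have hVX := part_disj hπ hV hXπ h1 hx1
      exact hsep ⟨X, hX, hx1, hVX ▸ h2⟩

end Merge

section Collapse

variable {n : ℕ} (p : Fin n) {π : Finset (Finset (Fin (n+1)))}

theorem image_cMap_LS (W : Finset (Fin n)) : (LS p W).image (cMap p) = W := by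
  ext i
  rw [Finset.mem_image]
  constructor
  · rintro ⟨j, hj, rfl⟩
    exact mem_LS.1 hj
  · intro hi
    exact ⟨eMap p i, mem_LS.2 (by rwa [cMap_eMap]), cMap_eMap p i⟩

theorem LS_image_cMap (hπ : IsPartition π) {B : Finset (Fin (n+1))} (hB : B ∈ Mrg p π) :
    LS p (B.image (cMap p)) = B := by
  have hMP := Mrg_isPartition p hπ
  ext j
  rw [mem_LS, Finset.mem_image]
  constructor
  · rintro ⟨x, hx, hcx⟩
    rcases cMap_eq p hcx with rfl | ⟨h1, h2⟩ | ⟨h1, h2⟩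
    · exact hx
    · have hx' : x = p.castSucc := Fin.ext (by simpa using h1)
      have hj' : j = p.succ := Fin.ext (by simpa using h2)
      subst hx'; subst hj'
      have hBU := part_disj hMP hB (U_mem_Mrg p) hx
        (Finset.mem_union_left _ (blk_mem hπ p.castSucc).2)
      rw [hBU]
      exact Finset.mem_union_right _ (blk_mem hπ p.succ).2
    · have hx' : x = p.succ := Fin.ext (by simpa using h2)
      have hj' : j = p.castSucc := Fin.ext (by simpa using h1)
      subst hx'; subst hj'
      have hBU := part_disj hMP hB (U_mem_Mrg p) hx
        (Finset.mem_union_right _ (blk_mem hπ p.succ).2)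
      rw [hBU]
      exact Finset.mem_union_left _ (blk_mem hπ p.castSucc).2
  · intro hj
    exact ⟨j, hj, rfl⟩

theorem eMap_mem_of_mem_image (hπ : IsPartition π) {B : Finset (Fin (n+1))}
    (hB : B ∈ Mrg p π) {i : Fin n} (hi : i ∈ B.image (cMap p)) : eMap p i ∈ B := by
  rw [← LS_image_cMap p hπ hB, mem_LS, cMap_eMap]
  exact hi

theorem Cls_isPartition (hπ : IsPartition π) : IsPartition (Cls p π) := by
  have hMP := Mrg_isPartition p hπ
  constructor
  · rintro Z hZ
    obtain ⟨B, hB, rfl⟩ := Finset.mem_image.1 hZ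
    obtain ⟨x, hx⟩ := hMP.1 B hB
    exact ⟨cMap p x, Finset.mem_image_of_mem _ hx⟩
  · intro i
    have hB := blk_mem hMP (eMap p i)
    refine ⟨(blk (Mrg p π) (eMap p i)).image (cMap p),
      ⟨Finset.mem_image_of_mem _ hB.1, Finset.mem_image.2 ⟨_, hB.2, cMap_eMap p i⟩⟩, ?_⟩
    rintro Z ⟨hZ, hiZ⟩
    obtain ⟨B', hB', rfl⟩ := Finset.mem_image.1 hZ
    have : eMap p i ∈ B' := eMap_mem_of_mem_image p hπ hB' hiZ
    rw [blk_eq hMP hB' this]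

theorem Cls_noCrossing (hπ : IsPartition π) (hnc : NoCrossing π) : NoCrossing (Cls p π) := by
  rintro ⟨i1, j1, i2, j2, h12, h23, h34, ⟨Z1, hZ1, hi1, hi2⟩, ⟨Z2, hZ2, hj1, hj2⟩, hsep⟩
  obtain ⟨B1, hB1, rfl⟩ := Finset.mem_image.1 hZ1
  obtain ⟨B2, hB2, rfl⟩ := Finset.mem_image.1 hZ2
  refine Mrg_noCrossing p hπ hnc ⟨eMap p i1, eMap p j1, eMap p i2, eMap p j2,
    eMap_strictMono p h12, eMap_strictMono p h23, eMap_strictMono p h34,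
    ⟨B1, hB1, eMap_mem_of_mem_image p hπ hB1 hi1, eMap_mem_of_mem_image p hπ hB1 hi2⟩,
    ⟨B2, hB2, eMap_mem_of_mem_image p hπ hB2 hj1, eMap_mem_of_mem_image p hπ hB2 hj2⟩, ?_⟩
  rintro ⟨V, hV, h1, h2⟩
  exact hsep ⟨V.image (cMap p), Finset.mem_image_of_mem _ hV,
    Finset.mem_image.2 ⟨_, h1, cMap_eMap p i1⟩, Finset.mem_image.2 ⟨_, h2, cMap_eMap p j1⟩⟩

theorem Cls_mem_NCP (hπ : π ∈ NCPartitions (n+1)) : Cls p π ∈ NCPartitions n := by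
  rw [NCPartitions, Finset.mem_filter] at *
  exact ⟨Finset.mem_univ _, Cls_isPartition p hπ.2.1, Cls_noCrossing p hπ.2.1 hπ.2.2⟩

theorem Lft_Cls (hπ : IsPartition π) : Lft p (Cls p π) = Mrg p π := by
  rw [Lft, Cls, Finset.image_image]
  have he : Set.EqOn ((LS p) ∘ fun B => Finset.image (cMap p) B) id ↑(Mrg p π) :=
    fun B hB => LS_image_cMap p hπ hB
  rw [Finset.image_congr he, Finset.image_id]

end Collapse

section UEmb

variable {n : ℕ} (p : Fin n) (V : Finset (Fin n)) (hpV : p ∈ V)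

noncomputable def qIdx : Fin V.card := (V.orderIsoOfFin rfl).symm ⟨p, hpV⟩

theorem oEOF_qIdx : V.orderEmbOfFin rfl (qIdx p V hpV) = p := by
  rw [← Finset.coe_orderIsoOfFin_apply, qIdx, OrderIso.apply_symm_apply]

theorem eMap_self : eMap p p = p.castSucc := by
  apply Fin.ext
  rw [eMap_val]
  simp

theorem oEOF_lt_q {i : Fin V.card} (h : (i : ℕ) < (qIdx p V hpV : ℕ)) :
    V.orderEmbOfFin rfl i < p := by
  rw [← oEOF_qIdx p V hpV]
  exact (V.orderEmbOfFin rfl).strictMono (by rwa [Fin.lt_def])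

theorem oEOF_gt_q {i : Fin V.card} (h : (qIdx p V hpV : ℕ) < (i : ℕ)) :
    p < V.orderEmbOfFin rfl i := by
  rw [← oEOF_qIdx p V hpV]
  exact (V.orderEmbOfFin rfl).strictMono (by rwa [Fin.lt_def])

noncomputable def gFun : Fin (V.card + 1) → Fin (n + 1) := fun j =>
  if h1 : (j : ℕ) ≤ (qIdx p V hpV : ℕ) then
    eMap p (V.orderEmbOfFin rfl ⟨j, by have := (qIdx p V hpV).isLt; omega⟩)
  else if h2 : (j : ℕ) = (qIdx p V hpV : ℕ) + 1 then p.succ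
  else eMap p (V.orderEmbOfFin rfl ⟨(j : ℕ) - 1, by have := j.isLt; omega⟩)

theorem gFun_val_low {j : Fin (V.card + 1)} (h : (j : ℕ) ≤ (qIdx p V hpV : ℕ)) :
    gFun p V hpV j = eMap p (V.orderEmbOfFin rfl ⟨j, by have := (qIdx p V hpV).isLt; omega⟩)
    := by rw [gFun]; simp [h]

theorem gFun_val_mid {j : Fin (V.card + 1)} (h : (j : ℕ) = (qIdx p V hpV : ℕ) + 1) :
    gFun p V hpV j = p.succ := by
  rw [gFun]
  have : ¬ (j : ℕ) ≤ (qIdx p V hpV : ℕ) := by omega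
  simp [this, h]

theorem gFun_val_high {j : Fin (V.card + 1)} (h : (qIdx p V hpV : ℕ) + 1 < (j : ℕ)) :
    gFun p V hpV j = eMap p (V.orderEmbOfFin rfl ⟨(j : ℕ) - 1, by have := j.isLt; omega⟩)
    := by
  rw [gFun]
  have h1 : ¬ (j : ℕ) ≤ (qIdx p V hpV : ℕ) := by omega
  have h2 : ¬ (j : ℕ) = (qIdx p V hpV : ℕ) + 1 := by omega
  simp [h1, h2]

theorem gFun_natval {j : Fin (V.card + 1)} :
    ((gFun p V hpV j : Fin (n+1)) : ℕ) =
      if h1 : (j : ℕ) ≤ (qIdx p V hpV : ℕ) then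
        (V.orderEmbOfFin rfl ⟨j, by have := (qIdx p V hpV).isLt; omega⟩ : ℕ)
      else if (j : ℕ) = (qIdx p V hpV : ℕ) + 1 then (p : ℕ) + 1
      else (V.orderEmbOfFin rfl ⟨(j : ℕ) - 1, by have := j.isLt; omega⟩ : ℕ) + 1 := by
  set q := qIdx p V hpV with hq
  by_cases h1 : (j : ℕ) ≤ (q : ℕ)
  · rw [gFun_val_low p V hpV h1, eMap_val, dif_pos h1]
    have hle : V.orderEmbOfFin rfl ⟨j, by have := q.isLt; omega⟩ ≤ p := by
      rcases Nat.lt_or_ge (j : ℕ) (q : ℕ) with h | h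
      · exact (oEOF_lt_q p V hpV h).le
      · have : (⟨j, by have := q.isLt; omega⟩ : Fin V.card) = q :=
          Fin.ext (by show (j : ℕ) = (q : ℕ); omega)
        rw [this, oEOF_qIdx]
    rw [Fin.le_def] at hle
    rw [if_pos hle]
  · by_cases h2 : (j : ℕ) = (q : ℕ) + 1
    · rw [gFun_val_mid p V hpV h2, dif_neg h1, if_pos h2, Fin.val_succ]
    · have h3 : (q : ℕ) + 1 < (j : ℕ) := by omega
      rw [gFun_val_high p V hpV h3, eMap_val, dif_neg h1, if_neg h2]
      have hgt : p < V.orderEmbOfFin rfl ⟨(j : ℕ) - 1, by have := j.isLt; omega⟩ :=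
        oEOF_gt_q p V hpV (by show (q : ℕ) < (j : ℕ) - 1; omega)
      rw [Fin.lt_def] at hgt
      rw [if_neg (by omega)]

theorem gFun_strictMono : StrictMono (gFun p V hpV) := by
  intro i j hij
  rw [Fin.lt_def] at hij ⊢
  rw [gFun_natval, gFun_natval]
  set q := qIdx p V hpV with hq
  have oeof_mono : ∀ (x y : Fin V.card), (x : ℕ) < (y : ℕ) →
      ((V.orderEmbOfFin rfl x : Fin n) : ℕ) < ((V.orderEmbOfFin rfl y : Fin n) : ℕ) := by
    intro x y hxy
    have := (V.orderEmbOfFin rfl).strictMono (show x < y by rwa [Fin.lt_def])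
    rwa [Fin.lt_def] at this
  have oeof_le_p : ∀ (x : Fin V.card), (x : ℕ) ≤ (q : ℕ) →
      ((V.orderEmbOfFin rfl x : Fin n) : ℕ) ≤ (p : ℕ) := by
    intro x hx
    rcases Nat.lt_or_ge (x : ℕ) (q : ℕ) with h | h
    · have := oEOF_lt_q p V hpV h
      rw [Fin.lt_def] at this
      omega
    · have : x = q := Fin.ext (by omega)
      rw [this, oEOF_qIdx]
  have oeof_gt_p : ∀ (x : Fin V.card), (q : ℕ) < (x : ℕ) →
      (p : ℕ) < ((V.orderEmbOfFin rfl x : Fin n) : ℕ) := by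
    intro x hx
    have := oEOF_gt_q p V hpV hx
    rwa [Fin.lt_def] at this
  by_cases hi1 : (i : ℕ) ≤ (q : ℕ)
  · by_cases hj1 : (j : ℕ) ≤ (q : ℕ)
    · rw [dif_pos hi1, dif_pos hj1]
      exact oeof_mono _ _ hij
    · have hle := oeof_le_p ⟨i, by have := q.isLt; omega⟩ hi1
      by_cases hj2 : (j : ℕ) = (q : ℕ) + 1
      · rw [dif_pos hi1, dif_neg hj1, if_pos hj2]
        omega
      · have hgt := oeof_gt_p ⟨(j : ℕ) - 1, by have := j.isLt; omega⟩
          (by show (q : ℕ) < (j : ℕ) - 1; omega)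
        rw [dif_pos hi1, dif_neg hj1, if_neg hj2]
        omega
  · by_cases hi2 : (i : ℕ) = (q : ℕ) + 1
    · have hj1 : ¬ (j : ℕ) ≤ (q : ℕ) := by omega
      have hj2 : ¬ (j : ℕ) = (q : ℕ) + 1 := by omega
      have hgt := oeof_gt_p ⟨(j : ℕ) - 1, by have := j.isLt; omega⟩
        (by show (q : ℕ) < (j : ℕ) - 1; omega)
      rw [dif_neg hi1, if_pos hi2, dif_neg hj1, if_neg hj2]
      omega
    · have hj1 : ¬ (j : ℕ) ≤ (q : ℕ) := by omega
      have hj2 : ¬ (j : ℕ) = (q : ℕ) + 1 := by omega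
      have := oeof_mono ⟨(i : ℕ) - 1, by have := i.isLt; omega⟩
        ⟨(j : ℕ) - 1, by have := j.isLt; omega⟩ (by show (i:ℕ) - 1 < (j:ℕ) - 1; omega)
      rw [dif_neg hi1, if_neg hi2, dif_neg hj1, if_neg hj2]
      omega

theorem gFun_mem (j : Fin (V.card + 1)) : gFun p V hpV j ∈ LS p V := by
  rw [mem_LS]
  by_cases h1 : (j : ℕ) ≤ (qIdx p V hpV : ℕ)
  · rw [gFun_val_low p V hpV h1, cMap_eMap]
    exact Finset.orderEmbOfFin_mem _ _ _
  · by_cases h2 : (j : ℕ) = (qIdx p V hpV : ℕ) + 1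
    · rw [gFun_val_mid p V hpV h2, cMap_succ]
      exact hpV
    · rw [gFun_val_high p V hpV (by omega), cMap_eMap]
      exact Finset.orderEmbOfFin_mem _ _ _

theorem u_eq_gFun (j : Fin (V.card + 1)) :
    (LS p V).orderEmbOfFin (card_LS_of_mem hpV) j = gFun p V hpV j := by
  have := Finset.orderEmbOfFin_unique (card_LS_of_mem hpV) (f := gFun p V hpV)
    (gFun_mem p V hpV) (gFun_strictMono p V hpV)
  exact (congrFun this j).symm

theorem u_q : (LS p V).orderEmbOfFin (card_LS_of_mem hpV)
    ⟨(qIdx p V hpV : ℕ), by have := (qIdx p V hpV).isLt; omega⟩ = p.castSucc := by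
  rw [u_eq_gFun p V hpV, gFun_val_low p V hpV le_rfl]
  have key : ∀ (x : Fin V.card), x = qIdx p V hpV →
      eMap p (V.orderEmbOfFin rfl x) = p.castSucc := by
    rintro x rfl
    rw [oEOF_qIdx, eMap_self]
  exact key _ (Fin.ext rfl)

theorem u_q1 : (LS p V).orderEmbOfFin (card_LS_of_mem hpV)
    ⟨(qIdx p V hpV : ℕ) + 1, by have := (qIdx p V hpV).isLt; omega⟩ = p.succ := by
  rw [u_eq_gFun p V hpV, gFun_val_mid p V hpV rfl]

end UEmb

theorem top_isPartition (N : ℕ) (hN : 0 < N) :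
    IsPartition ({Finset.univ} : Finset (Finset (Fin N))) := by
  constructor
  · intro Z hZ
    rw [Finset.mem_singleton] at hZ
    subst hZ
    exact ⟨⟨0, hN⟩, Finset.mem_univ _⟩
  · intro i
    exact ⟨Finset.univ, ⟨Finset.mem_singleton_self _, Finset.mem_univ _⟩, by simp⟩

section Phi

variable {n : ℕ} (p : Fin n) (πh : Finset (Finset (Fin n))) (V : Finset (Fin n))

noncomputable def Phi (hpV : p ∈ V) (ρ : Finset (Finset (Fin (V.card + 1)))) :
    Finset (Finset (Fin (n+1))) :=
  (πh.erase V).image (fun W => W.image (eMap p)) ∪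
    ρ.image (fun B => B.image ((LS p V).orderEmbOfFin (card_LS_of_mem hpV)))

variable (hpV : p ∈ V)

theorem u_qc : (LS p V).orderEmbOfFin (card_LS_of_mem hpV) (qIdx p V hpV).castSucc
    = p.castSucc := by
  have h : (qIdx p V hpV).castSucc = (⟨(qIdx p V hpV : ℕ),
      by have := (qIdx p V hpV).isLt; omega⟩ : Fin (V.card+1)) := Fin.ext (by simp)
  rw [h]
  exact u_q p V hpV

theorem u_qs : (LS p V).orderEmbOfFin (card_LS_of_mem hpV) (qIdx p V hpV).succ
    = p.succ := by
  have h : (qIdx p V hpV).succ = (⟨(qIdx p V hpV : ℕ) + 1,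
      by have := (qIdx p V hpV).isLt; omega⟩ : Fin (V.card+1)) := Fin.ext (by simp)
  rw [h]
  exact u_q1 p V hpV

theorem exists_u {x : Fin (n+1)} (hx : x ∈ LS p V) :
    ∃ j, (LS p V).orderEmbOfFin (card_LS_of_mem hpV) j = x := by
  have h : (x : Fin (n+1)) ∈ Set.range ((LS p V).orderEmbOfFin (card_LS_of_mem hpV)) := by
    rw [Finset.range_orderEmbOfFin]
    exact_mod_cast hx
  exact h

theorem image_univ_u : Finset.univ.image ((LS p V).orderEmbOfFin (card_LS_of_mem hpV))
    = LS p V := by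
  ext x
  rw [Finset.mem_image]
  constructor
  · rintro ⟨j, _, rfl⟩
    exact Finset.orderEmbOfFin_mem _ _ _
  · intro hx
    obtain ⟨j, rfl⟩ := exists_u p V hpV hx
    exact ⟨j, Finset.mem_univ _, rfl⟩

theorem erase_not_mem_p (hp1 : p ∈ V) (hP : IsPartition πh) (hV : V ∈ πh) {W : Finset (Fin n)}
    (hW : W ∈ πh.erase V) : p ∉ W := by
  intro hpW
  exact (Finset.mem_erase.1 hW).1 (part_disj hP (Finset.mem_erase.1 hW).2 hV hpW hp1)

theorem eblock_not_LS (hp1 : p ∈ V) (hP : IsPartition πh) (hV : V ∈ πh) {W : Finset (Fin n)}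
    (hW : W ∈ πh.erase V) {x : Fin (n+1)} (hx : x ∈ W.image (eMap p))
    (hx' : x ∈ LS p V) : False := by
  obtain ⟨i, hi, rfl⟩ := Finset.mem_image.1 hx
  rw [mem_LS, cMap_eMap] at hx'
  exact (Finset.mem_erase.1 hW).1 (part_disj hP (Finset.mem_erase.1 hW).2 hV hi hx')

theorem eblock_val (hp1 : p ∈ V) (hP : IsPartition πh) (hV : V ∈ πh) {W : Finset (Fin n)}
    (hW : W ∈ πh.erase V) {x : Fin (n+1)} (hx : x ∈ W.image (eMap p)) :
    (x : ℕ) ≠ (p : ℕ) ∧ (x : ℕ) ≠ (p : ℕ) + 1 := by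
  obtain ⟨i, hi, rfl⟩ := Finset.mem_image.1 hx
  constructor
  · intro h
    have : i = p := by
      have := eMap_val p i
      apply Fin.ext
      split_ifs at this <;> omega
    exact erase_not_mem_p p πh V hp1 hP hV hW (this ▸ hi)
  · intro h
    have : eMap p i = p.succ := Fin.ext (by simpa using h)
    exact eMap_ne_succ p i this

theorem mem_Phi {ρ : Finset (Finset (Fin (V.card + 1)))} {Z : Finset (Fin (n+1))} :
    Z ∈ Phi p πh V hpV ρ ↔ (∃ W ∈ πh.erase V, Z = W.image (eMap p)) ∨
      (∃ B ∈ ρ, Z = B.image ((LS p V).orderEmbOfFin (card_LS_of_mem hpV))) := by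
  rw [Phi, Finset.mem_union, Finset.mem_image, Finset.mem_image]
  constructor
  · rintro (⟨W, hW, rfl⟩ | ⟨B, hB, rfl⟩)
    · exact Or.inl ⟨W, hW, rfl⟩
    · exact Or.inr ⟨B, hB, rfl⟩
  · rintro (⟨W, hW, rfl⟩ | ⟨B, hB, rfl⟩)
    · exact Or.inl ⟨W, hW, rfl⟩
    · exact Or.inr ⟨B, hB, rfl⟩

theorem Phi_isPartition (hP : IsPartition πh) (hV : V ∈ πh) {ρ : Finset (Finset (Fin (V.card + 1)))} (hρ : IsPartition ρ) :
    IsPartition (Phi p πh V hpV ρ) := by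
  constructor
  · intro Z hZ
    rcases (mem_Phi p πh V hpV).1 hZ with ⟨W, hW, rfl⟩ | ⟨B, hB, rfl⟩
    · obtain ⟨x, hx⟩ := hP.1 W (Finset.mem_erase.1 hW).2
      exact ⟨eMap p x, Finset.mem_image_of_mem _ hx⟩
    · obtain ⟨x, hx⟩ := hρ.1 B hB
      exact ⟨_, Finset.mem_image_of_mem _ hx⟩
  · intro j
    by_cases hjV : j ∈ LS p V
    · obtain ⟨jj, rfl⟩ := exists_u p V hpV hjV
      refine ⟨(blk ρ jj).image ((LS p V).orderEmbOfFin (card_LS_of_mem hpV)),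
        ⟨(mem_Phi p πh V hpV).2 (Or.inr ⟨blk ρ jj, (blk_mem hρ jj).1, rfl⟩),
          Finset.mem_image_of_mem _ (blk_mem hρ jj).2⟩, ?_⟩
      rintro Z ⟨hZ, hjZ⟩
      rcases (mem_Phi p πh V hpV).1 hZ with ⟨W, hW, rfl⟩ | ⟨B, hB, rfl⟩
      · exact absurd (eblock_not_LS p πh V hpV hP hV hW hjZ
          (Finset.orderEmbOfFin_mem _ _ _)) (fun h => h)
      · obtain ⟨x, hx, hux⟩ := Finset.mem_image.1 hjZ
        have : x = jj := ((LS p V).orderEmbOfFin (card_LS_of_mem hpV)).injective hux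
        subst this
        rw [blk_eq hρ hB hx]
    · have hcjV : cMap p j ∉ V := fun h => hjV (mem_LS.2 h)
      have hjP1 : j ≠ p.succ := by
        rintro rfl
        exact hcjV (by rwa [cMap_succ])
      have hW0 := blk_mem hP (cMap p j)
      have hW0V : blk πh (cMap p j) ≠ V := fun h => hcjV (h ▸ hW0.2)
      have hW0e : blk πh (cMap p j) ∈ πh.erase V := Finset.mem_erase.2 ⟨hW0V, hW0.1⟩
      refine ⟨(blk πh (cMap p j)).image (eMap p),
        ⟨(mem_Phi p πh V hpV).2 (Or.inl ⟨_, hW0e, rfl⟩),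
          Finset.mem_image.2 ⟨cMap p j, hW0.2, eMap_cMap p hjP1⟩⟩, ?_⟩
      rintro Z ⟨hZ, hjZ⟩
      rcases (mem_Phi p πh V hpV).1 hZ with ⟨W, hW, rfl⟩ | ⟨B, hB, rfl⟩
      · obtain ⟨i, hi, rfl⟩ := Finset.mem_image.1 hjZ
        rw [cMap_eMap] at *
        rw [blk_eq hP (Finset.mem_erase.1 hW).2 hi]
      · exfalso
        obtain ⟨x, _, rfl⟩ := Finset.mem_image.1 hjZ
        exact hjV (Finset.orderEmbOfFin_mem _ _ _)

theorem Phi_noCrossing (hP : IsPartition πh) (hV : V ∈ πh) (hNC : NoCrossing πh) {ρ : Finset (Finset (Fin (V.card + 1)))}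
    (hρ : IsPartition ρ) (hρnc : NoCrossing ρ) : NoCrossing (Phi p πh V hpV ρ) := by
  rintro ⟨x1, y1, x2, y2, h12, h23, h34, ⟨X, hX, hx1, hx2⟩, ⟨Y, hY, hy1, hy2⟩, hsep⟩
  have hXY : X ≠ Y := by
    rintro rfl
    exact hsep ⟨X, hX, hx1, hy1⟩
  rcases (mem_Phi p πh V hpV).1 hX with ⟨W1, hW1, rfl⟩ | ⟨B, hB, rfl⟩ <;>
    rcases (mem_Phi p πh V hpV).1 hY with ⟨W2, hW2, rfl⟩ | ⟨C, hC, rfl⟩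
  · -- both e-blocks
    have hv1 := eblock_val p πh V hpV hP hV hW1 hx1
    have hv2 := eblock_val p πh V hpV hP hV hW1 hx2
    have hw1 := eblock_val p πh V hpV hP hV hW2 hy1
    have hW12 : W1 ≠ W2 := fun h => hXY (by rw [h])
    obtain ⟨i1, hi1, rfl⟩ := Finset.mem_image.1 hx1
    obtain ⟨i2, hi2, rfl⟩ := Finset.mem_image.1 hx2
    obtain ⟨j1, hj1, rfl⟩ := Finset.mem_image.1 hy1
    obtain ⟨j2, hj2, rfl⟩ := Finset.mem_image.1 hy2
    refine hNC ⟨i1, j1, i2, j2, ?_, ?_, ?_, ⟨W1, (Finset.mem_erase.1 hW1).2, hi1, hi2⟩,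
      ⟨W2, (Finset.mem_erase.1 hW2).2, hj1, hj2⟩, ?_⟩
    · exact (eMap_strictMono p).lt_iff_lt.1 h12
    · exact (eMap_strictMono p).lt_iff_lt.1 h23
    · exact (eMap_strictMono p).lt_iff_lt.1 h34
    · rintro ⟨D, hD, hd1, hd2⟩
      have := part_disj hP hD (Finset.mem_erase.1 hW1).2 hd1 hi1
      subst this
      exact hW12 (part_disj hP hD (Finset.mem_erase.1 hW2).2 hd2 hj1)
  · -- X e-block, Y u-block
    have hxv1 := eblock_val p πh V hpV hP hV hW1 hx1
    have hxv2 := eblock_val p πh V hpV hP hV hW1 hx2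
    have hcx1 : cMap p x1 ∈ W1 := by
      obtain ⟨i, hi, rfl⟩ := Finset.mem_image.1 hx1; rwa [cMap_eMap]
    have hcx2 : cMap p x2 ∈ W1 := by
      obtain ⟨i, hi, rfl⟩ := Finset.mem_image.1 hx2; rwa [cMap_eMap]
    have hcy1 : cMap p y1 ∈ V := by
      obtain ⟨c1, _, rfl⟩ := Finset.mem_image.1 hy1
      exact mem_LS.1 (Finset.orderEmbOfFin_mem _ _ _)
    have hcy2 : cMap p y2 ∈ V := by
      obtain ⟨c2, _, rfl⟩ := Finset.mem_image.1 hy2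
      exact mem_LS.1 (Finset.orderEmbOfFin_mem _ _ _)
    have hc12 : cMap p x1 < cMap p y1 := by
      have e1 := cMap_val p x1; have e2 := cMap_val p y1
      rw [Fin.lt_def] at h12 ⊢
      split_ifs at e1 e2 <;> omega
    have hc23 : cMap p y1 < cMap p x2 := by
      have e1 := cMap_val p y1; have e2 := cMap_val p x2
      rw [Fin.lt_def] at h23 ⊢
      split_ifs at e1 e2 <;> omega
    have hc34 : cMap p x2 < cMap p y2 := by
      have e1 := cMap_val p x2; have e2 := cMap_val p y2
      rw [Fin.lt_def] at h34 ⊢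
      split_ifs at e1 e2 <;> omega
    refine hNC ⟨cMap p x1, cMap p y1, cMap p x2, cMap p y2, hc12, hc23, hc34,
      ⟨W1, (Finset.mem_erase.1 hW1).2, hcx1, hcx2⟩, ⟨V, hV, hcy1, hcy2⟩, ?_⟩
    rintro ⟨D, hD, h1, h2⟩
    have hDW : D = W1 := part_disj hP hD (Finset.mem_erase.1 hW1).2 h1 hcx1
    exact (Finset.mem_erase.1 hW1).1 (by rw [← hDW]; exact part_disj hP hD hV h2 hcy1)
  · -- X u-block, Y e-block
    have hyv1 := eblock_val p πh V hpV hP hV hW2 hy1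
    have hyv2 := eblock_val p πh V hpV hP hV hW2 hy2
    have hcy1 : cMap p y1 ∈ W2 := by
      obtain ⟨i, hi, rfl⟩ := Finset.mem_image.1 hy1; rwa [cMap_eMap]
    have hcy2 : cMap p y2 ∈ W2 := by
      obtain ⟨i, hi, rfl⟩ := Finset.mem_image.1 hy2; rwa [cMap_eMap]
    have hcx1 : cMap p x1 ∈ V := by
      obtain ⟨b1, _, rfl⟩ := Finset.mem_image.1 hx1
      exact mem_LS.1 (Finset.orderEmbOfFin_mem _ _ _)
    have hcx2 : cMap p x2 ∈ V := by
      obtain ⟨b2, _, rfl⟩ := Finset.mem_image.1 hx2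
      exact mem_LS.1 (Finset.orderEmbOfFin_mem _ _ _)
    have hc12 : cMap p x1 < cMap p y1 := by
      have e1 := cMap_val p x1; have e2 := cMap_val p y1
      rw [Fin.lt_def] at h12 ⊢
      split_ifs at e1 e2 <;> omega
    have hc23 : cMap p y1 < cMap p x2 := by
      have e1 := cMap_val p y1; have e2 := cMap_val p x2
      rw [Fin.lt_def] at h23 ⊢
      split_ifs at e1 e2 <;> omega
    have hc34 : cMap p x2 < cMap p y2 := by
      have e1 := cMap_val p x2; have e2 := cMap_val p y2
      rw [Fin.lt_def] at h34 ⊢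
      split_ifs at e1 e2 <;> omega
    refine hNC ⟨cMap p x1, cMap p y1, cMap p x2, cMap p y2, hc12, hc23, hc34,
      ⟨V, hV, hcx1, hcx2⟩, ⟨W2, (Finset.mem_erase.1 hW2).2, hcy1, hcy2⟩, ?_⟩
    rintro ⟨D, hD, h1, h2⟩
    have hDV : D = V := part_disj hP hD hV h1 hcx1
    exact (Finset.mem_erase.1 hW2).1
      ((part_disj hP hD (Finset.mem_erase.1 hW2).2 h2 hcy1).symm.trans hDV)
  · -- both u-blocks
    obtain ⟨b1, hb1, rfl⟩ := Finset.mem_image.1 hx1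
    obtain ⟨b2, hb2, rfl⟩ := Finset.mem_image.1 hx2
    obtain ⟨c1, hc1, rfl⟩ := Finset.mem_image.1 hy1
    obtain ⟨c2, hc2, rfl⟩ := Finset.mem_image.1 hy2
    have hmono := ((LS p V).orderEmbOfFin (card_LS_of_mem hpV)).strictMono
    refine hρnc ⟨b1, c1, b2, c2, hmono.lt_iff_lt.1 h12, hmono.lt_iff_lt.1 h23,
      hmono.lt_iff_lt.1 h34, ⟨B, hB, hb1, hb2⟩, ⟨C, hC, hc1, hc2⟩, ?_⟩
    rintro ⟨D, hD, hd1, hd2⟩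
    exact hsep ⟨D.image ((LS p V).orderEmbOfFin (card_LS_of_mem hpV)),
      (mem_Phi p πh V hpV).2 (Or.inr ⟨D, hD, rfl⟩),
      Finset.mem_image_of_mem _ hd1, Finset.mem_image_of_mem _ hd2⟩

end Phi

theorem union_singleton_cancel {α : Type*} [DecidableEq α] {A B : Finset α} {x : α}
    (h : A ∪ {x} = insert x B) (hA : x ∉ A) (hB : x ∉ B) : A = B := by
  have h2 : (A ∪ {x}).erase x = (insert x B).erase x := by rw [h]
  rwa [Finset.union_comm, ← Finset.insert_eq, Finset.erase_insert hA,
    Finset.erase_insert hB] at h2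

theorem NCP_spec {N : ℕ} {π : Finset (Finset (Fin N))} :
    π ∈ NCPartitions N ↔ IsPartition π ∧ NoCrossing π := by
  rw [NCPartitions, Finset.mem_filter]
  simp

section Fiber

variable {n : ℕ} (p : Fin n) (πh : Finset (Finset (Fin n))) (V : Finset (Fin n))
  (hpV : p ∈ V)

theorem Lft_decomp (hp1 : p ∈ V) (hP : IsPartition πh) (hV : V ∈ πh) :
    Lft p πh = insert (LS p V)
      ((πh.erase V).image (fun W => W.image (eMap p))) := by
  conv_lhs => rw [Lft, ← Finset.insert_erase hV]
  rw [Finset.image_insert]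
  congr 1
  apply Finset.image_congr
  intro W hW
  exact LS_of_not_mem (erase_not_mem_p p πh V hp1 hP hV hW)

theorem Phi_top (hP : IsPartition πh) (hV : V ∈ πh) :
    Phi p πh V hpV {Finset.univ} = Lft p πh := by
  rw [Phi, Finset.image_singleton, image_univ_u p V hpV, Lft_decomp p πh V hpV hP hV,
    Finset.union_comm, Finset.insert_eq]

theorem LS_not_mem_ebl (hp1 : p ∈ V) (hP : IsPartition πh) (hV : V ∈ πh) :
    LS p V ∉ (πh.erase V).image (fun W => W.image (eMap p)) := by
  rw [Finset.mem_image]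
  rintro ⟨W, hW, h⟩
  have hP1 : p.succ ∈ LS p V := mem_LS.2 (by rwa [cMap_succ])
  exact eblock_not_LS p πh V hp1 hP hV hW (h ▸ hP1) hP1

theorem Mrg_of_same {π : Finset (Finset (Fin (n+1)))} (hπ : IsPartition π)
    (h : blk π p.castSucc = blk π p.succ) : Mrg p π = π := by
  rw [Mrg, h, Finset.union_self]
  have hpair : ({blk π p.succ, blk π p.succ} : Finset (Finset (Fin (n+1))))
      = {blk π p.succ} := by simp
  rw [hpair]
  exact Finset.sdiff_union_of_subset
    (Finset.singleton_subset_iff.2 (blk_mem hπ p.succ).1)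

theorem Mrg_Phi_top (hP : IsPartition πh) (hV : V ∈ πh) :
    Mrg p (Phi p πh V hpV {Finset.univ}) = Lft p πh := by
  have hpart := Phi_isPartition p πh V hpV hP hV (top_isPartition _ (by omega))
  have hP0 : p.castSucc ∈ LS p V := mem_LS.2 (by rwa [cMap_castSucc])
  have hP1 : p.succ ∈ LS p V := mem_LS.2 (by rwa [cMap_succ])
  have hLSmem : LS p V ∈ Phi p πh V hpV {Finset.univ} :=
    (mem_Phi p πh V hpV).2 (Or.inr ⟨Finset.univ, Finset.mem_singleton_self _,
      (image_univ_u p V hpV).symm⟩)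
  rw [Mrg_of_same p hpart ((blk_eq hpart hLSmem hP0).trans (blk_eq hpart hLSmem hP1).symm)]
  exact Phi_top p πh V hpV hP hV

theorem Mrg_Phi_two (hP : IsPartition πh) (hV : V ∈ πh)
    {ρ : Finset (Finset (Fin (V.card + 1)))} (hρ : IsPartition ρ) (h2 : ρ.card = 2)
    (hsep : ¬ ∃ D ∈ ρ, (qIdx p V hpV).castSucc ∈ D ∧ (qIdx p V hpV).succ ∈ D) :
    Mrg p (Phi p πh V hpV ρ) = Lft p πh := by
  set u := (LS p V).orderEmbOfFin (card_LS_of_mem hpV) with hu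
  set qc := (qIdx p V hpV).castSucc with hqc
  set qs := (qIdx p V hpV).succ with hqs
  set Bh := blk ρ qc with hBh
  set Ch := blk ρ qs with hCh
  have hBC : Bh ≠ Ch := by
    intro h
    exact hsep ⟨Bh, (blk_mem hρ qc).1, (blk_mem hρ qc).2, h ▸ (blk_mem hρ qs).2⟩
  have hρeq : ρ = {Bh, Ch} := by
    refine (Finset.eq_of_subset_of_card_le ?_ ?_).symm
    · intro Z hZ
      rcases Finset.mem_insert.1 hZ with rfl | hZ
      · exact (blk_mem hρ qc).1
      · rw [Finset.mem_singleton] at hZ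
        subst hZ
        exact (blk_mem hρ qs).1
    · rw [h2, Finset.card_insert_of_notMem (by simpa using hBC), Finset.card_singleton]
  have hBCuniv : Bh ∪ Ch = Finset.univ := by
    ext x
    simp only [Finset.mem_union, Finset.mem_univ, iff_true]
    have hx := blk_mem hρ x
    have : blk ρ x ∈ ({Bh, Ch} : Finset _) := hρeq ▸ hx.1
    rcases Finset.mem_insert.1 this with h | h
    · exact Or.inl (h ▸ hx.2)
    · rw [Finset.mem_singleton] at h
      exact Or.inr (h ▸ hx.2)
  have hpart := Phi_isPartition p πh V hpV hP hV hρ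
  have hblk0 : blk (Phi p πh V hpV ρ) p.castSucc = Bh.image u := by
    rw [← u_qc p V hpV]
    exact blk_eq hpart ((mem_Phi p πh V hpV).2 (Or.inr ⟨Bh, (blk_mem hρ qc).1, rfl⟩))
      (Finset.mem_image_of_mem _ (blk_mem hρ qc).2)
  have hblk1 : blk (Phi p πh V hpV ρ) p.succ = Ch.image u := by
    rw [← u_qs p V hpV]
    exact blk_eq hpart ((mem_Phi p πh V hpV).2 (Or.inr ⟨Ch, (blk_mem hρ qs).1, rfl⟩))
      (Finset.mem_image_of_mem _ (blk_mem hρ qs).2)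
  rw [Mrg, hblk0, hblk1, ← Finset.image_union, hBCuniv, image_univ_u p V hpV]
  have hPhi : Phi p πh V hpV ρ = ((πh.erase V).image (fun W => W.image (eMap p)))
      ∪ {Bh.image u, Ch.image u} := by
    rw [Phi]
    congr 1
    rw [hρeq, Finset.image_insert, Finset.image_singleton]
  rw [hPhi, Finset.union_sdiff_right]
  have hdisj : Disjoint ((πh.erase V).image (fun W => W.image (eMap p)))
      ({Bh.image u, Ch.image u} : Finset _) := by
    rw [Finset.disjoint_right]
    intro Z hZ hZ'
    obtain ⟨W, hW, rfl⟩ := Finset.mem_image.1 hZ'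
    rcases Finset.mem_insert.1 hZ with h | h
    · obtain ⟨x, hx⟩ := hρ.1 Bh (blk_mem hρ qc).1
      refine eblock_not_LS p πh V hpV hP hV hW ?_ (Finset.orderEmbOfFin_mem (LS p V) (card_LS_of_mem hpV) x)
      rw [h]
      exact Finset.mem_image_of_mem _ hx
    · rw [Finset.mem_singleton] at h
      obtain ⟨x, hx⟩ := hρ.1 Ch (blk_mem hρ qs).1
      refine eblock_not_LS p πh V hpV hP hV hW ?_ (Finset.orderEmbOfFin_mem (LS p V) (card_LS_of_mem hpV) x)
      rw [h]
      exact Finset.mem_image_of_mem _ hx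
  rw [Finset.sdiff_eq_self_of_disjoint hdisj, Lft_decomp p πh V hpV hP hV,
    Finset.union_comm, Finset.insert_eq]

end Fiber

section Fiber2

variable {n : ℕ} (p : Fin n) (πh : Finset (Finset (Fin n))) (V : Finset (Fin n))
  (hpV : p ∈ V)

theorem Phi_inj (hP : IsPartition πh) (hV : V ∈ πh)
    {ρ1 ρ2 : Finset (Finset (Fin (V.card + 1)))} (h1 : IsPartition ρ1)
    (h2 : IsPartition ρ2) (h : Phi p πh V hpV ρ1 = Phi p πh V hpV ρ2) : ρ1 = ρ2 := by
  have key : ∀ (σ1 σ2 : Finset (Finset (Fin (V.card + 1)))), IsPartition σ1 →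
      Phi p πh V hpV σ1 = Phi p πh V hpV σ2 → ∀ D ∈ σ1, D ∈ σ2 := by
    intro σ1 σ2 hσ1 hEq D hD
    have hmem : D.image ((LS p V).orderEmbOfFin (card_LS_of_mem hpV)) ∈
        Phi p πh V hpV σ2 := hEq ▸ ((mem_Phi p πh V hpV).2 (Or.inr ⟨D, hD, rfl⟩))
    rcases (mem_Phi p πh V hpV).1 hmem with ⟨W, hW, himg⟩ | ⟨B, hB, himg⟩
    · exfalso
      obtain ⟨x, hx⟩ := hσ1.1 D hD
      refine eblock_not_LS p πh V hpV hP hV hW ?_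
        (Finset.orderEmbOfFin_mem (LS p V) (card_LS_of_mem hpV) x)
      rw [← himg]
      exact Finset.mem_image_of_mem _ hx
    · have : D = B := Finset.image_injective
        ((LS p V).orderEmbOfFin (card_LS_of_mem hpV)).injective himg
      exact this ▸ hB
  ext D
  exact ⟨fun hD => key _ _ h1 h D hD, fun hD => key _ _ h2 h.symm D hD⟩

theorem fiber_eq (hP : IsPartition πh) (hNC : NoCrossing πh) (hV : V ∈ πh) :
    (NCPartitions (n+1)).filter (fun π => Mrg p π = Lft p πh) =
      (insert ({Finset.univ} : Finset (Finset (Fin (V.card+1))))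
        ((NCPartitions (V.card + 1)).filter (fun ρ => ρ.card = 2 ∧
          ¬ ∃ D ∈ ρ, (qIdx p V hpV).castSucc ∈ D ∧ (qIdx p V hpV).succ ∈ D))).image
        (Phi p πh V hpV) := by
  ext π
  rw [Finset.mem_filter, Finset.mem_image]
  constructor
  · rintro ⟨hπmem, hM⟩
    obtain ⟨hπpart, hπnc⟩ := NCP_spec.1 hπmem
    have hP0LS : p.castSucc ∈ LS p V := mem_LS.2 (by rwa [cMap_castSucc])
    have hP1LS : p.succ ∈ LS p V := mem_LS.2 (by rwa [cMap_succ])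
    have hV' : LS p V ∈ Mrg p π := by
      rw [hM, Lft]
      exact Finset.mem_image_of_mem _ hV
    have hMP := Mrg_isPartition p hπpart
    have hUV : blk π p.castSucc ∪ blk π p.succ = LS p V :=
      part_disj hMP (U_mem_Mrg p) hV'
        (Finset.mem_union_left _ (blk_mem hπpart p.castSucc).2) hP0LS
    by_cases hsame : blk π p.castSucc = blk π p.succ
    · refine ⟨{Finset.univ}, Finset.mem_insert_self _ _, ?_⟩
      rw [Phi_top p πh V hpV hP hV, ← hM, Mrg_of_same p hπpart hsame]
    · set B0 := blk π p.castSucc with hB0d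
      set B1 := blk π p.succ with hB1d
      set u := (LS p V).orderEmbOfFin (card_LS_of_mem hpV) with hud
      have hB0π := (blk_mem hπpart p.castSucc).1
      have hB1π := (blk_mem hπpart p.succ).1
      have hdisj01 : ∀ x, x ∈ B0 → x ∈ B1 → False := fun x h0 h1 =>
        hsame (part_disj hπpart hB0π hB1π h0 h1)
      set Bh := Finset.univ.filter (fun j => u j ∈ B0) with hBhd
      set Ch := Finset.univ.filter (fun j => u j ∈ B1) with hChd
      have memBh : ∀ j, j ∈ Bh ↔ u j ∈ B0 := fun j => by rw [hBhd]; simp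
      have memCh : ∀ j, j ∈ Ch ↔ u j ∈ B1 := fun j => by rw [hChd]; simp
      have himB : Bh.image u = B0 := by
        ext x
        rw [Finset.mem_image]
        constructor
        · rintro ⟨j, hj, rfl⟩
          exact (memBh j).1 hj
        · intro hx
          have hxLS : x ∈ LS p V := hUV ▸ Finset.mem_union_left _ hx
          obtain ⟨j, rfl⟩ := exists_u p V hpV hxLS
          exact ⟨j, (memBh j).2 hx, rfl⟩
      have himC : Ch.image u = B1 := by
        ext x
        rw [Finset.mem_image]
        constructor
        · rintro ⟨j, hj, rfl⟩
          exact (memCh j).1 hj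
        · intro hx
          have hxLS : x ∈ LS p V := hUV ▸ Finset.mem_union_right _ hx
          obtain ⟨j, rfl⟩ := exists_u p V hpV hxLS
          exact ⟨j, (memCh j).2 hx, rfl⟩
      have huqc : u (qIdx p V hpV).castSucc = p.castSucc := u_qc p V hpV
      have huqs : u (qIdx p V hpV).succ = p.succ := u_qs p V hpV
      have hqcB : (qIdx p V hpV).castSucc ∈ Bh := (memBh _).2
        (by rw [huqc]; exact (blk_mem hπpart p.castSucc).2)
      have hqsC : (qIdx p V hpV).succ ∈ Ch := (memCh _).2
        (by rw [huqs]; exact (blk_mem hπpart p.succ).2)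
      have hBhCh : Bh ≠ Ch := by
        intro h
        have h' : u (qIdx p V hpV).castSucc ∈ B1 := (memCh _).1 (h ▸ hqcB)
        rw [huqc] at h'
        exact hdisj01 _ (blk_mem hπpart p.castSucc).2 h'
      have hmemsBC : ∀ j, u j ∈ B0 ∨ u j ∈ B1 := by
        intro j
        have : u j ∈ LS p V := Finset.orderEmbOfFin_mem _ _ _
        rw [← hUV] at this
        exact Finset.mem_union.1 this
      have hρpart : IsPartition ({Bh, Ch} : Finset (Finset (Fin (V.card + 1)))) := by
        constructor
        · intro Z hZ
          rcases Finset.mem_insert.1 hZ with rfl | hZ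
          · exact ⟨_, hqcB⟩
          · rw [Finset.mem_singleton] at hZ
            subst hZ
            exact ⟨_, hqsC⟩
        · intro j
          rcases hmemsBC j with hj | hj
          · refine ⟨Bh, ⟨Finset.mem_insert_self _ _, (memBh _).2 hj⟩, ?_⟩
            rintro Z ⟨hZ, hjZ⟩
            rcases Finset.mem_insert.1 hZ with rfl | hZ
            · rfl
            · rw [Finset.mem_singleton] at hZ
              subst hZ
              exact absurd ((memCh _).1 hjZ) (fun hh => hdisj01 _ hj hh)
          · refine ⟨Ch, ⟨Finset.mem_insert_of_mem (Finset.mem_singleton_self _),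
              (memCh _).2 hj⟩, ?_⟩
            rintro Z ⟨hZ, hjZ⟩
            rcases Finset.mem_insert.1 hZ with rfl | hZ
            · exact absurd ((memBh _).1 hjZ) (fun hh => hdisj01 _ hh hj)
            · rw [Finset.mem_singleton] at hZ
              subst hZ
              rfl
      have hmono := ((LS p V).orderEmbOfFin (card_LS_of_mem hpV)).strictMono
      have hρnc : NoCrossing ({Bh, Ch} : Finset (Finset (Fin (V.card + 1)))) := by
        rintro ⟨b1, c1, b2, c2, k12, k23, k34, ⟨D1, hD1, m1, m2⟩, ⟨D2, hD2, m3, m4⟩, hsep2⟩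
        have hD12 : D1 ≠ D2 := fun h => hsep2 ⟨D1, hD1, m1, h ▸ m3⟩
        rcases Finset.mem_insert.1 hD1 with rfl | hD1' <;>
          rcases Finset.mem_insert.1 hD2 with rfl | hD2'
        · exact hD12 rfl
        · rw [Finset.mem_singleton] at hD2'
          subst hD2'
          refine hπnc ⟨u b1, u c1, u b2, u c2, hmono k12, hmono k23, hmono k34,
            ⟨B0, hB0π, (memBh _).1 m1, (memBh _).1 m2⟩,
            ⟨B1, hB1π, (memCh _).1 m3, (memCh _).1 m4⟩, ?_⟩
          rintro ⟨D, hD, e1, e2⟩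
          have hDB0 : D = B0 := part_disj hπpart hD hB0π e1 ((memBh _).1 m1)
          exact hdisj01 _ (hDB0 ▸ e2) ((memCh _).1 m3)
        · rw [Finset.mem_singleton] at hD1'
          subst hD1'
          refine hπnc ⟨u b1, u c1, u b2, u c2, hmono k12, hmono k23, hmono k34,
            ⟨B1, hB1π, (memCh _).1 m1, (memCh _).1 m2⟩,
            ⟨B0, hB0π, (memBh _).1 m3, (memBh _).1 m4⟩, ?_⟩
          rintro ⟨D, hD, e1, e2⟩
          have hDB1 : D = B1 := part_disj hπpart hD hB1π e1 ((memCh _).1 m1)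
          exact hdisj01 _ ((memBh _).1 m3) (hDB1 ▸ e2)
        · rw [Finset.mem_singleton] at hD1' hD2'
          subst hD1'; subst hD2'
          exact hD12 rfl
      have hcard2 : ({Bh, Ch} : Finset (Finset (Fin (V.card + 1)))).card = 2 := by
        rw [Finset.card_insert_of_notMem (by simpa using hBhCh), Finset.card_singleton]
      have hsepρ : ¬ ∃ D ∈ ({Bh, Ch} : Finset (Finset (Fin (V.card + 1)))),
          (qIdx p V hpV).castSucc ∈ D ∧ (qIdx p V hpV).succ ∈ D := by
        rintro ⟨D, hD, hc, hs⟩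
        rcases Finset.mem_insert.1 hD with rfl | hD
        · have : u (qIdx p V hpV).succ ∈ B0 := (memBh _).1 hs
          rw [huqs] at this
          exact hdisj01 _ this (blk_mem hπpart p.succ).2
        · rw [Finset.mem_singleton] at hD
          subst hD
          have : u (qIdx p V hpV).castSucc ∈ B1 := (memCh _).1 hc
          rw [huqc] at this
          exact hdisj01 _ (blk_mem hπpart p.castSucc).2 this
      refine ⟨{Bh, Ch}, Finset.mem_insert_of_mem
        (Finset.mem_filter.2 ⟨NCP_spec.2 ⟨hρpart, hρnc⟩, hcard2, hsepρ⟩), ?_⟩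
      have hVnotπ : LS p V ∉ π := fun h =>
        hsame ((blk_eq hπpart h hP0LS).trans (blk_eq hπpart h hP1LS).symm)
      have hM' : (π \ {B0, B1}) ∪ {LS p V} = insert (LS p V)
          ((πh.erase V).image (fun W => W.image (eMap p))) := by
        have h1 := hM
        rw [Mrg, hUV, Lft_decomp p πh V hpV hP hV] at h1
        exact h1
      have hebl : π \ {B0, B1} = (πh.erase V).image (fun W => W.image (eMap p)) :=
        union_singleton_cancel hM' (fun h => hVnotπ (Finset.mem_sdiff.1 h).1)
          (LS_not_mem_ebl p πh V hpV hP hV)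
      rw [Phi, Finset.image_insert, Finset.image_singleton, himB, himC, ← hebl]
      refine Finset.sdiff_union_of_subset ?_
      intro Z hZ
      rcases Finset.mem_insert.1 hZ with rfl | hZ
      · exact hB0π
      · rw [Finset.mem_singleton] at hZ
        subst hZ
        exact hB1π
  · rintro ⟨ρ, hρmem, rfl⟩
    rcases Finset.mem_insert.1 hρmem with rfl | hρSQ
    · exact ⟨NCP_spec.2 ⟨Phi_isPartition p πh V hpV hP hV (top_isPartition _ (Nat.succ_pos _)),
        Phi_noCrossing p πh V hpV hP hV hNC (top_isPartition _ (Nat.succ_pos _))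
          (top_noCrossing _)⟩, Mrg_Phi_top p πh V hpV hP hV⟩
    · obtain ⟨hρNCP, h2, hsep⟩ := Finset.mem_filter.1 hρSQ
      obtain ⟨hρpart, hρnc⟩ := NCP_spec.1 hρNCP
      exact ⟨NCP_spec.2 ⟨Phi_isPartition p πh V hpV hP hV hρpart,
        Phi_noCrossing p πh V hpV hP hV hNC hρpart hρnc⟩,
        Mrg_Phi_two p πh V hpV hP hV hρpart h2 hsep⟩

end Fiber2

theorem oEOF_cast {α : Type*} [LinearOrder α] (s : Finset α) {m : ℕ} (h : s.card = m)
    (i : Fin m) : s.orderEmbOfFin h i = s.orderEmbOfFin rfl (Fin.cast h.symm i) := by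
  rw [Finset.orderEmbOfFin_apply, Finset.orderEmbOfFin_apply]
  simp

theorem k_term_cast {A : Type*} [Ring A] (k : ∀ N : ℕ, (Fin N → A) → ℂ) {N : ℕ}
    (a : Fin N → A) (Z : Finset (Fin N)) {m : ℕ} (hm : Z.card = m) :
    k Z.card (fun i => a (Z.orderEmbOfFin rfl i)) = k m (fun i => a (Z.orderEmbOfFin hm i)) := by
  refine kcongr k hm fun i => ?_
  rw [oEOF_cast Z hm]
  have hcc : Fin.cast hm.symm (Fin.cast hm i) = i := Fin.ext rfl
  rw [hcc]

section BComp

variable {n : ℕ} (p : Fin n)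

theorem eMap_of_le {x : Fin n} (h : (x : ℕ) ≤ (p : ℕ)) : eMap p x = x.castSucc := by
  apply Fin.ext
  rw [eMap_val, if_pos h]
  simp

theorem eMap_of_gt {x : Fin n} (h : (p : ℕ) < (x : ℕ)) : eMap p x = x.succ := by
  apply Fin.ext
  rw [eMap_val, if_neg (by omega)]
  simp

variable (V : Finset (Fin n)) (hpV : p ∈ V) {A : Type*} [Ring A]

theorem bFun_comp (a : Fin (n+1) → A) (i : Fin V.card) :
    (if ((V.orderEmbOfFin rfl i : Fin n) : ℕ) < (p : ℕ) then a (V.orderEmbOfFin rfl i).castSucc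
     else if V.orderEmbOfFin rfl i = p then a p.castSucc * a p.succ
     else a (V.orderEmbOfFin rfl i).succ) =
    (if (i : ℕ) < (qIdx p V hpV : ℕ) then
        a ((LS p V).orderEmbOfFin (card_LS_of_mem hpV) i.castSucc)
     else if i = qIdx p V hpV then
        a ((LS p V).orderEmbOfFin (card_LS_of_mem hpV) (qIdx p V hpV).castSucc) *
          a ((LS p V).orderEmbOfFin (card_LS_of_mem hpV) (qIdx p V hpV).succ)
     else a ((LS p V).orderEmbOfFin (card_LS_of_mem hpV) i.succ)) := by
  set q := qIdx p V hpV with hq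
  rcases Nat.lt_trichotomy (i : ℕ) (q : ℕ) with hiq | hiq | hiq
  · -- i < q
    have h1 : V.orderEmbOfFin rfl i < p := oEOF_lt_q p V hpV hiq
    rw [Fin.lt_def] at h1
    rw [if_pos h1, if_pos hiq]
    rw [u_eq_gFun p V hpV, gFun_val_low p V hpV (by simp; omega)]
    have : (⟨((i.castSucc : Fin (V.card+1)) : ℕ), by simpa using i.isLt⟩ : Fin V.card) = i :=
      Fin.ext (by simp)
    rw [this, eMap_of_le p (by omega)]
  · -- i = q
    have hiq' : i = q := Fin.ext hiq
    have h1 : V.orderEmbOfFin rfl i = p := by rw [hiq', hq, oEOF_qIdx]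
    rw [if_neg (by rw [h1]; omega), if_pos h1, if_neg (by omega), if_pos hiq',
      u_qc p V hpV, u_qs p V hpV]
  · -- i > q
    have h1 : p < V.orderEmbOfFin rfl i := oEOF_gt_q p V hpV hiq
    rw [Fin.lt_def] at h1
    have hne : V.orderEmbOfFin rfl i ≠ p := fun h => by rw [h] at h1; omega
    rw [if_neg (by omega), if_neg hne, if_neg (by omega),
      if_neg (fun h => by rw [h] at hiq; omega)]
    rw [u_eq_gFun p V hpV, gFun_val_high p V hpV (by simp; omega)]
    have : (⟨((i.succ : Fin (V.card+1)) : ℕ) - 1, by simpa using i.isLt⟩ : Fin V.card) = i :=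
      Fin.ext (by simp)
    rw [this, eMap_of_gt p (by omega)]

end BComp

section CumPhi

variable {n : ℕ} (p : Fin n) (πh : Finset (Finset (Fin n))) (V : Finset (Fin n))
  (hpV : p ∈ V) {A : Type*} [Ring A]

theorem cumProd_Phi (hP : IsPartition πh) (hV : V ∈ πh)
    {ρ : Finset (Finset (Fin (V.card + 1)))} (hρ : IsPartition ρ)
    (k : ∀ N : ℕ, (Fin N → A) → ℂ) (a : Fin (n+1) → A) :
    cumProd k (Phi p πh V hpV ρ) a =
      cumProd k ρ (fun j => a ((LS p V).orderEmbOfFin (card_LS_of_mem hpV) j)) *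
        ∏ W ∈ πh.erase V, k W.card (fun i => a (eMap p (W.orderEmbOfFin rfl i))) := by
  have hdisj : Disjoint ((πh.erase V).image (fun W => W.image (eMap p)))
      (ρ.image (fun B => B.image ((LS p V).orderEmbOfFin (card_LS_of_mem hpV)))) := by
    rw [Finset.disjoint_right]
    intro Z hZ hZ'
    obtain ⟨B, hB, rfl⟩ := Finset.mem_image.1 hZ
    obtain ⟨W, hW, himg⟩ := Finset.mem_image.1 hZ'
    obtain ⟨x, hx⟩ := hρ.1 B hB
    refine eblock_not_LS p πh V hpV hP hV hW ?_
      (Finset.orderEmbOfFin_mem (LS p V) (card_LS_of_mem hpV) x)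
    rw [himg]
    exact Finset.mem_image_of_mem _ hx
  rw [cumProd, Phi, Finset.prod_union hdisj, mul_comm]
  congr 1
  · -- the u-blocks
    rw [Finset.prod_image (fun B1 h1 B2 h2 h => Finset.image_injective
      ((LS p V).orderEmbOfFin (card_LS_of_mem hpV)).injective h), cumProd]
    refine Finset.prod_congr rfl fun B hB => ?_
    have hcard : (B.image ((LS p V).orderEmbOfFin (card_LS_of_mem hpV))).card = B.card :=
      Finset.card_image_of_injective _
        ((LS p V).orderEmbOfFin (card_LS_of_mem hpV)).injective
    rw [k_term_cast k a _ hcard]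
    refine congrArg _ (funext fun i => congrArg a ?_)
    exact image_orderEmbOfFin ((LS p V).orderEmbOfFin (card_LS_of_mem hpV)).strictMono
      B rfl hcard i
  · -- the e-blocks
    rw [Finset.prod_image (fun W1 h1 W2 h2 h => Finset.image_injective
      (eMap_strictMono p).injective h)]
    refine Finset.prod_congr rfl fun W hW => ?_
    have hcard : (W.image (eMap p)).card = W.card :=
      Finset.card_image_of_injective _ (eMap_strictMono p).injective
    rw [k_term_cast k a _ hcard]
    refine congrArg _ (funext fun i => congrArg a ?_)
    exact image_orderEmbOfFin (eMap_strictMono p) W rfl hcard i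

end CumPhi

theorem Lft_top {n : ℕ} (p : Fin n) :
    Lft p ({Finset.univ} : Finset (Finset (Fin n))) = {Finset.univ} := by
  rw [Lft, Finset.image_singleton, LS_univ]

theorem listProd_eq {A : Type*} [Ring A] : ∀ (m : ℕ) (f : Fin (m+1) → A) (j : Fin m),
    (List.ofFn (fun i : Fin m => if (i : ℕ) < (j : ℕ) then f i.castSucc
      else if i = j then f j.castSucc * f j.succ else f i.succ)).prod
    = (List.ofFn f).prod := by
  intro m
  induction m with
  | zero => exact fun f j => absurd j.isLt (by omega)
  | succ m IH =>
    intro f j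
    rcases Fin.eq_zero_or_eq_succ j with rfl | ⟨j', rfl⟩
    · rw [List.ofFn_succ, List.prod_cons]
      conv_rhs => rw [List.ofFn_succ, List.prod_cons, List.ofFn_succ, List.prod_cons,
        ← mul_assoc]
      have htail0 : (List.ofFn fun i : Fin m =>
          (fun x : Fin (m+1) => if (x : ℕ) < ((0 : Fin (m+1)) : ℕ) then f x.castSucc
            else if x = 0 then f (0 : Fin (m+1)).castSucc * f (0 : Fin (m+1)).succ
            else f x.succ) i.succ)
          = List.ofFn (fun i : Fin m => f i.succ.succ) := by
        refine congrArg _ (funext fun i => ?_)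
        beta_reduce
        rw [if_neg (by simp), if_neg (Fin.succ_ne_zero i)]
      rw [htail0]
      refine congr_arg₂ _ ?_ rfl
      beta_reduce
      rw [if_neg (by simp), if_pos rfl]
      exact congr_arg₂ _ (congrArg f Fin.castSucc_zero) rfl
    · rw [List.ofFn_succ, List.prod_cons]
      conv_rhs => rw [List.ofFn_succ, List.prod_cons]
      have htail : (List.ofFn fun i : Fin m =>
          (fun x : Fin (m+1) => if (x : ℕ) < ((j'.succ : Fin (m+1)) : ℕ) then f x.castSucc
            else if x = j'.succ then f j'.succ.castSucc * f j'.succ.succ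
            else f x.succ) i.succ)
          = List.ofFn (fun i : Fin m => if (i : ℕ) < (j' : ℕ)
              then (fun t : Fin (m+1) => f t.succ) i.castSucc
              else if i = j' then (fun t : Fin (m+1) => f t.succ) j'.castSucc *
                (fun t : Fin (m+1) => f t.succ) j'.succ
              else (fun t : Fin (m+1) => f t.succ) i.succ) := by
        refine congrArg _ (funext fun i => ?_)
        beta_reduce
        by_cases h1 : (i : ℕ) < (j' : ℕ)
        · rw [if_pos (show ((i.succ : Fin (m+1)) : ℕ) < ((j'.succ : Fin (m+1)) : ℕ) by
              rw [Fin.val_succ, Fin.val_succ]; omega), if_pos h1]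
          exact congrArg f (Fin.succ_castSucc i).symm
        · by_cases h2 : i = j'
          · subst h2
            rw [if_neg (show ¬ ((i.succ : Fin (m+1)) : ℕ) < ((i.succ : Fin (m+1)) : ℕ) from
              lt_irrefl _), if_pos rfl, if_neg h1, if_pos rfl, Fin.succ_castSucc]
          · rw [if_neg (show ¬ ((i.succ : Fin (m+1)) : ℕ) < ((j'.succ : Fin (m+1)) : ℕ) by
              rw [Fin.val_succ, Fin.val_succ]; omega),
              if_neg (fun hh => h2 (Fin.succ_injective _ hh)), if_neg h1, if_neg h2]
      rw [htail, IH (fun t => f t.succ) j']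
      refine congr_arg₂ _ ?_ rfl
      beta_reduce
      rw [if_pos (by simp)]
      exact congrArg f Fin.castSucc_zero

section FTop

variable {n : ℕ} (p : Fin n)

theorem F_top_eq :
    (NCPartitions (n+1)).filter
        (fun π => Mrg p π = Lft p ({Finset.univ} : Finset (Finset (Fin n)))) =
      insert {Finset.univ} ((NCPartitions (n+1)).filter
        (fun π => π.card = 2 ∧ ¬ ∃ Z ∈ π, p.castSucc ∈ Z ∧ p.succ ∈ Z)) := by
  rw [Lft_top]
  ext π
  rw [Finset.mem_filter, Finset.mem_insert, Finset.mem_filter]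
  constructor
  · rintro ⟨hmem, hM⟩
    obtain ⟨hpart, hnc⟩ := NCP_spec.1 hmem
    by_cases hsame : blk π p.castSucc = blk π p.succ
    · left
      rw [Mrg_of_same p hpart hsame] at hM
      exact hM
    · right
      refine ⟨hmem, ?_, ?_⟩
      · have hU : blk π p.castSucc ∪ blk π p.succ = Finset.univ := by
          have : blk π p.castSucc ∪ blk π p.succ ∈ Mrg p π := U_mem_Mrg p
          rw [hM, Finset.mem_singleton] at this
          exact this
        have hsd : π \ {blk π p.castSucc, blk π p.succ} = ∅ := by
          rw [Finset.eq_empty_iff_forall_notMem]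
          intro Z hZ
          have hZM : Z ∈ Mrg p π := Finset.mem_union_left _ hZ
          rw [hM, Finset.mem_singleton] at hZM
          have hZ' := Finset.mem_sdiff.1 hZ
          apply hZ'.2
          have : p.castSucc ∈ Z := by rw [hZM]; exact Finset.mem_univ _
          rw [Finset.mem_insert]
          exact Or.inl (blk_eq hpart hZ'.1 this).symm
        have hsub : π ⊆ {blk π p.castSucc, blk π p.succ} := by
          intro Z hZ
          by_contra hne
          exact Finset.eq_empty_iff_forall_notMem.1 hsd Z (Finset.mem_sdiff.2 ⟨hZ, hne⟩)
        have heq : π = {blk π p.castSucc, blk π p.succ} := by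
          apply Finset.Subset.antisymm hsub
          intro Z hZ
          rcases Finset.mem_insert.1 hZ with rfl | hZ
          · exact (blk_mem hpart p.castSucc).1
          · rw [Finset.mem_singleton] at hZ
            subst hZ
            exact (blk_mem hpart p.succ).1
        rw [heq, Finset.card_insert_of_notMem (by simpa using hsame),
          Finset.card_singleton]
      · rintro ⟨Z, hZ, h0, h1⟩
        exact hsame ((blk_eq hpart hZ h0).trans (blk_eq hpart hZ h1).symm)
  · rintro (rfl | ⟨hmem, h2, hsep⟩)
    · have hpart := top_isPartition (n+1) (Nat.succ_pos _)
      refine ⟨NCP_spec.2 ⟨hpart, top_noCrossing _⟩, ?_⟩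
      have h0 : blk {Finset.univ} p.castSucc = (Finset.univ : Finset (Fin (n+1))) :=
        blk_eq hpart (Finset.mem_singleton_self _) (Finset.mem_univ _)
      have h1 : blk {Finset.univ} p.succ = (Finset.univ : Finset (Fin (n+1))) :=
        blk_eq hpart (Finset.mem_singleton_self _) (Finset.mem_univ _)
      rw [Mrg_of_same p hpart (h0.trans h1.symm)]
    · obtain ⟨hpart, hnc⟩ := NCP_spec.1 hmem
      refine ⟨hmem, ?_⟩
      have hBB : blk π p.castSucc ≠ blk π p.succ := by
        intro h
        exact hsep ⟨blk π p.castSucc, (blk_mem hpart p.castSucc).1,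
          (blk_mem hpart p.castSucc).2, h ▸ (blk_mem hpart p.succ).2⟩
      have heq : π = {blk π p.castSucc, blk π p.succ} := by
        refine (Finset.eq_of_subset_of_card_le ?_ ?_).symm
        · intro Z hZ
          rcases Finset.mem_insert.1 hZ with rfl | hZ
          · exact (blk_mem hpart p.castSucc).1
          · rw [Finset.mem_singleton] at hZ
            subst hZ
            exact (blk_mem hpart p.succ).1
        · rw [h2, Finset.card_insert_of_notMem (by simpa using hBB),
            Finset.card_singleton]
      have hU : blk π p.castSucc ∪ blk π p.succ = Finset.univ := by
        ext x
        simp only [Finset.mem_union, Finset.mem_univ, iff_true]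
        have hx := blk_mem hpart x
        have hxm : blk π x ∈ ({blk π p.castSucc, blk π p.succ} : Finset _) :=
          heq ▸ hx.1
        rcases Finset.mem_insert.1 hxm with h | h
        · exact Or.inl (h ▸ hx.2)
        · rw [Finset.mem_singleton] at h
          exact Or.inr (h ▸ hx.2)
      rw [Mrg, hU]
      have hemp : π \ {blk π p.castSucc, blk π p.succ} = ∅ :=
        Finset.sdiff_eq_empty_iff_subset.2 heq.le
      rw [hemp, Finset.empty_union]

end FTop

theorem claimB {A : Type*} [Ring A] (k : ∀ N : ℕ, (Fin N → A) → ℂ) {n : ℕ} (p : Fin n)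
    {πh : Finset (Finset (Fin n))} (hπh : πh ∈ NCPartitions n)
    (hne : πh ≠ {Finset.univ}) (a : Fin (n+1) → A)
    (IH : ∀ m, m < n → 1 ≤ m → ∀ (f : Fin (m+1) → A) (q : Fin m),
      k m (fun i => if (i : ℕ) < (q : ℕ) then f i.castSucc
        else if i = q then f q.castSucc * f q.succ else f i.succ)
      = k (m+1) f + ∑ ρ ∈ (NCPartitions (m+1)).filter
          (fun ρ => ρ.card = 2 ∧ ¬ ∃ D ∈ ρ, q.castSucc ∈ D ∧ q.succ ∈ D), cumProd k ρ f) :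
    cumProd k πh (fun i => if (i : ℕ) < (p : ℕ) then a i.castSucc
        else if i = p then a p.castSucc * a p.succ else a i.succ)
      = ∑ π ∈ (NCPartitions (n+1)).filter (fun π => Mrg p π = Lft p πh),
          cumProd k π a := by
  obtain ⟨hP, hNC⟩ := NCP_spec.1 hπh
  set V := blk πh p with hVd
  have hV : V ∈ πh := (blk_mem hP p).1
  have hpV : p ∈ V := (blk_mem hP p).2
  have hm1 : 1 ≤ V.card := Finset.card_pos.2 ⟨p, hpV⟩
  have hmn : V.card < n := by
    have hVne : V ≠ Finset.univ := by
      intro h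
      apply hne
      ext Z
      rw [Finset.mem_singleton]
      constructor
      · intro hZ
        obtain ⟨x, hx⟩ := hP.1 Z hZ
        rw [part_disj hP hZ hV hx (by rw [h]; exact Finset.mem_univ x), h]
      · rintro rfl
        rw [← h]
        exact hV
    calc V.card < (Finset.univ : Finset (Fin n)).card :=
          Finset.card_lt_card (Finset.ssubset_univ_iff.2 hVne)
      _ = n := by simp
  have partof : ∀ ρ ∈ insert ({Finset.univ} : Finset (Finset (Fin (V.card+1))))
      ((NCPartitions (V.card + 1)).filter (fun ρ => ρ.card = 2 ∧
        ¬ ∃ D ∈ ρ, (qIdx p V hpV).castSucc ∈ D ∧ (qIdx p V hpV).succ ∈ D)),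
      IsPartition ρ := by
    intro ρ hρ
    rcases Finset.mem_insert.1 hρ with rfl | hρ
    · exact top_isPartition _ (Nat.succ_pos _)
    · exact (NCP_spec.1 (Finset.mem_filter.1 hρ).1).1
  have key := IH V.card hmn hm1
    (fun j => a ((LS p V).orderEmbOfFin (card_LS_of_mem hpV) j)) (qIdx p V hpV)
  rw [fiber_eq p πh V hpV hP hNC hV,
    Finset.sum_image (fun x hx y hy h => Phi_inj p πh V hpV hP hV (partof x hx) (partof y hy) h),
    Finset.sum_insert (fun h => by
      have := (Finset.mem_filter.1 h).2.1
      simp at this),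
    cumProd_Phi p πh V hpV hP hV (top_isPartition _ (Nat.succ_pos _)) k a,
    Finset.sum_congr rfl (fun ρ hρ => cumProd_Phi p πh V hpV hP hV
      ((NCP_spec.1 (Finset.mem_filter.1 hρ).1).1) k a),
    ← Finset.sum_mul, cumProd_top, ← add_mul, ← key, cumProd,
    ← Finset.mul_prod_erase πh _ hV]
  congr 1
  · exact congrArg _ (funext fun i => bFun_comp p V hpV a i)
  · refine Finset.prod_congr rfl fun W hW => congrArg _ (funext fun i => ?_)
    have hx : (W.orderEmbOfFin rfl i) ∈ W := Finset.orderEmbOfFin_mem _ _ _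
    have hne' : W.orderEmbOfFin rfl i ≠ p :=
      fun h => erase_not_mem_p p πh V hpV hP hV hW (h ▸ hx)
    rcases Nat.lt_trichotomy ((W.orderEmbOfFin rfl i : Fin n) : ℕ) (p : ℕ) with hc | hc | hc
    · rw [if_pos hc, eMap_of_le p (le_of_lt hc)]
    · exact absurd (Fin.ext hc) hne'
    · rw [if_neg (by omega), if_neg hne', eMap_of_gt p hc]

theorem mainAux {A : Type*} [Ring A] [Algebra ℂ A] (φ : A →ₗ[ℂ] ℂ)
    (k : ∀ N : ℕ, (Fin N → A) → ℂ) (hk : MomentCumulant φ k) :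
    ∀ n : ℕ, 1 ≤ n → ∀ (a : Fin (n+1) → A) (p : Fin n),
    k n (fun i => if (i : ℕ) < (p : ℕ) then a i.castSucc
        else if i = p then a p.castSucc * a p.succ else a i.succ)
      = k (n+1) a + ∑ π ∈ (NCPartitions (n+1)).filter
          (fun π => π.card = 2 ∧ ¬ ∃ V ∈ π, p.castSucc ∈ V ∧ p.succ ∈ V),
          cumProd k π a := by
  intro n
  induction n using Nat.strong_induction_on with
  | _ n IH =>
    intro hn a p
    have hE : ∑ πh ∈ NCPartitions n, cumProd k πh
        (fun i => if (i : ℕ) < (p : ℕ) then a i.castSucc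
          else if i = p then a p.castSucc * a p.succ else a i.succ)
        = ∑ π ∈ NCPartitions (n+1), cumProd k π a := by
      rw [← hk n _, ← hk (n+1) a]
      exact congrArg φ (listProd_eq n a p)
    have hfib : ∑ π ∈ NCPartitions (n+1), cumProd k π a
        = ∑ πh ∈ NCPartitions n, ∑ π ∈ (NCPartitions (n+1)).filter
            (fun π => Cls p π = πh), cumProd k π a :=
      (Finset.sum_fiberwise_of_maps_to (fun π hπ => Cls_mem_NCP p hπ) _).symm
    have hpred : ∀ πh ∈ NCPartitions n, (NCPartitions (n+1)).filter
        (fun π => Cls p π = πh) = (NCPartitions (n+1)).filter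
        (fun π => Mrg p π = Lft p πh) := by
      intro πh hπh
      apply Finset.filter_congr
      intro π hπ
      have hπpart := (NCP_spec.1 hπ).1
      constructor
      · rintro rfl
        exact (Lft_Cls p hπpart).symm
      · intro h
        rw [Cls, h, Lft, Finset.image_image]
        have he : Set.EqOn ((fun B => Finset.image (cMap p) B) ∘ LS p) id ↑πh :=
          fun W hW => image_cMap_LS p W
        rw [Finset.image_congr he, Finset.image_id]
    have hEq2 : ∑ πh ∈ NCPartitions n, cumProd k πh
        (fun i => if (i : ℕ) < (p : ℕ) then a i.castSucc
          else if i = p then a p.castSucc * a p.succ else a i.succ)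
        = ∑ πh ∈ NCPartitions n, ∑ π ∈ (NCPartitions (n+1)).filter
            (fun π => Mrg p π = Lft p πh), cumProd k π a := by
      rw [hE, hfib]
      exact Finset.sum_congr rfl (fun πh hπh => by rw [hpred πh hπh])
    have htopNCP := top_mem_NCP n (by omega)
    have hERT : ∑ πh ∈ (NCPartitions n).erase {Finset.univ}, cumProd k πh
        (fun i => if (i : ℕ) < (p : ℕ) then a i.castSucc
          else if i = p then a p.castSucc * a p.succ else a i.succ)
        = ∑ πh ∈ (NCPartitions n).erase {Finset.univ},
            ∑ π ∈ (NCPartitions (n+1)).filter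
              (fun π => Mrg p π = Lft p πh), cumProd k π a :=
      Finset.sum_congr rfl (fun πh hπh =>
        claimB k p (Finset.mem_of_mem_erase hπh) (Finset.ne_of_mem_erase hπh) a
          (fun m hm hm1 f q => IH m hm hm1 f q))
    have hTop : cumProd k ({Finset.univ} : Finset (Finset (Fin n)))
        (fun i => if (i : ℕ) < (p : ℕ) then a i.castSucc
          else if i = p then a p.castSucc * a p.succ else a i.succ)
        = ∑ π ∈ (NCPartitions (n+1)).filter
            (fun π => Mrg p π = Lft p ({Finset.univ} : Finset (Finset (Fin n)))),
            cumProd k π a := by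
      have h1 := Finset.add_sum_erase _ (fun πh => cumProd k πh
        (fun i => if (i : ℕ) < (p : ℕ) then a i.castSucc
          else if i = p then a p.castSucc * a p.succ else a i.succ)) htopNCP
      have h2 := Finset.add_sum_erase _ (fun πh => ∑ π ∈ (NCPartitions (n+1)).filter
        (fun π => Mrg p π = Lft p πh), cumProd k π a) htopNCP
      rw [← h1, ← h2, hERT] at hEq2
      exact add_right_cancel hEq2
    rw [cumProd_top, F_top_eq p, Finset.sum_insert (fun h => by
      have := (Finset.mem_filter.1 h).2.1
      simp at this), cumProd_top] at hTop
    exact hTop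

/-- Formula for cumulants with products as entries: merging the entries at positions
p and p+1 gives the cumulant of the longer tuple plus the sum over non-crossing
partitions with exactly two blocks separating p from p+1. -/
theorem cumulant_of_product_entries {A : Type*} [Ring A] [Algebra ℂ A]
    (φ : A →ₗ[ℂ] ℂ) (hφ : φ 1 = 1)
    (k : ∀ n : ℕ, (Fin n → A) → ℂ) (hk : MomentCumulant φ k)
    (n : ℕ) (hn : 1 ≤ n) (a : Fin (n + 1) → A) (p : Fin n) :
    k n (fun i => if (i : ℕ) < (p : ℕ) then a i.castSucc
                  else if i = p then a p.castSucc * a p.succ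
                  else a i.succ)
      = k (n + 1) a +
        ∑ π ∈ (NCPartitions (n + 1)).filter
            (fun π => π.card = 2 ∧ ¬ ∃ V ∈ π, p.castSucc ∈ V ∧ p.succ ∈ V),
          cumProd k π a :=
  mainAux φ k hk n hn a p
end

section
/- Let (𝒜, φ) be a non-commutative probability space, σ ∈ NC(n) a non-crossing partition, and a₁,...,a_n ∈ 𝒜. Then φ_σ[a₁,...,a_n] = Σ_{π ∈ NC(n), π ≤ σ} k_π[a₁,...,a_n], where the sum is over non-crossing partitions refining σ. -/
open scoped Classical


open scoped Classical

/-- The product of moments according to the blocks of a partition. -/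
noncomputable def momProd {A : Type*} [Ring A] [Algebra ℂ A] (φ : A →ₗ[ℂ] ℂ)
    {N : ℕ} (π : Finset (Finset (Fin N))) (a : Fin N → A) : ℂ :=
  ∏ V ∈ π, φ (List.ofFn (fun i => a (V.orderEmbOfFin rfl i))).prod

/-!
Apply the moment–cumulant formula to each block `W` of `σ`, read as a word of length `|W|`
through the increasing enumeration of `W`, and expand the product of the resulting sums. A family
of non-crossing partitions `ρ_W` of the blocks corresponds to a single partition `π ≤ σ`, obtained
by transporting each `ρ_W` into `W`; this is a bijection onto the non-crossing refinements of `σ`.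
A crossing of `π` inside one block is a crossing of some `ρ_W`, and a crossing between blocks
would be a crossing of `σ`. The cumulant product of `π` is the product over `W` of those of `ρ_W`.
-/

open Finset

section BlockTransfer

variable {α : Type*} [LinearOrder α] {W V : Finset α}

def liftBlock (W : Finset α) (B : Finset (Fin W.card)) : Finset α :=
  B.map (W.orderEmbOfFin rfl).toEmbedding

def restrictBlock (W V : Finset α) : Finset (Fin W.card) :=
  univ.filter fun i => W.orderEmbOfFin rfl i ∈ V

lemma mem_liftBlock {B : Finset (Fin W.card)} {x : α} :
    x ∈ liftBlock W B ↔ ∃ i ∈ B, W.orderEmbOfFin rfl i = x :=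
  mem_map

lemma orderEmbOfFin_mem_liftBlock {B : Finset (Fin W.card)} {i : Fin W.card} :
    W.orderEmbOfFin rfl i ∈ liftBlock W B ↔ i ∈ B :=
  mem_map' _

lemma mem_restrictBlock {i : Fin W.card} : i ∈ restrictBlock W V ↔ W.orderEmbOfFin rfl i ∈ V := by
  simp [restrictBlock]

lemma liftBlock_subset (B : Finset (Fin W.card)) : liftBlock W B ⊆ W := fun x hx => by
  obtain ⟨i, -, rfl⟩ := mem_liftBlock.1 hx
  exact orderEmbOfFin_mem W rfl i

lemma liftBlock_injective : Function.Injective (liftBlock W) :=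
  map_injective _

lemma card_liftBlock (B : Finset (Fin W.card)) : (liftBlock W B).card = B.card :=
  card_map _

lemma exists_orderEmbOfFin_eq {x : α} (hx : x ∈ W) : ∃ i, W.orderEmbOfFin rfl i = x := by
  rwa [← Set.mem_range, range_orderEmbOfFin]

lemma restrictBlock_liftBlock (B : Finset (Fin W.card)) : restrictBlock W (liftBlock W B) = B := by
  ext i
  rw [mem_restrictBlock, orderEmbOfFin_mem_liftBlock]

lemma liftBlock_restrictBlock (h : V ⊆ W) : liftBlock W (restrictBlock W V) = V := by
  ext x
  refine ⟨fun hx => ?_, fun hx => ?_⟩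
  · obtain ⟨i, hi, rfl⟩ := mem_liftBlock.1 hx
    exact mem_restrictBlock.1 hi
  · obtain ⟨i, rfl⟩ := exists_orderEmbOfFin_eq (h hx)
    exact orderEmbOfFin_mem_liftBlock.2 (mem_restrictBlock.2 hx)

lemma orderEmbOfFin_liftBlock (B : Finset (Fin W.card)) (i : Fin B.card) :
    (liftBlock W B).orderEmbOfFin (card_liftBlock B) i =
      W.orderEmbOfFin rfl (B.orderEmbOfFin rfl i) := by
  refine (congrFun (orderEmbOfFin_unique (card_liftBlock B)
    (f := fun j => W.orderEmbOfFin rfl (B.orderEmbOfFin rfl j)) (fun j => ?_) ?_) i).symm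
  · exact orderEmbOfFin_mem_liftBlock.2 (orderEmbOfFin_mem B rfl j)
  · exact (W.orderEmbOfFin rfl).strictMono.comp (B.orderEmbOfFin rfl).strictMono

lemma apply_liftBlock {β γ : Type*} (f : ∀ m : ℕ, (Fin m → β) → γ) (a : α → β)
    (B : Finset (Fin W.card)) :
    f (liftBlock W B).card (fun i => a ((liftBlock W B).orderEmbOfFin rfl i)) =
      f B.card (fun i => a (W.orderEmbOfFin rfl (B.orderEmbOfFin rfl i))) := by
  -- `(liftBlock W B).card = B.card` holds only propositionally, so the arity is transported first.
  have transport : ∀ {m} (h : (liftBlock W B).card = m),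
      f (liftBlock W B).card (fun i => a ((liftBlock W B).orderEmbOfFin rfl i)) =
        f m (fun i => a ((liftBlock W B).orderEmbOfFin h i)) := by
    rintro _ rfl; rfl
  simp only [transport (card_liftBlock B), orderEmbOfFin_liftBlock]

def liftPartitions (σ : Finset (Finset α)) (p : ∀ W ∈ σ, Finset (Finset (Fin W.card))) :
    Finset (Finset α) :=
  σ.attach.biUnion fun W => (p W.1 W.2).image (liftBlock W.1)

def restrictPartition (W : Finset α) (π : Finset (Finset α)) : Finset (Finset (Fin W.card)) :=
  (π.filter (· ⊆ W)).image (restrictBlock W)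

lemma mem_liftPartitions {σ : Finset (Finset α)} {p : ∀ W ∈ σ, Finset (Finset (Fin W.card))} :
    V ∈ liftPartitions σ p ↔ ∃ W, ∃ hW : W ∈ σ, ∃ B ∈ p W hW, liftBlock W B = V := by
  simp [liftPartitions]

lemma mem_restrictPartition {π : Finset (Finset α)} {B : Finset (Fin W.card)} :
    B ∈ restrictPartition W π ↔ ∃ V ∈ π, V ⊆ W ∧ restrictBlock W V = B := by
  simp [restrictPartition, and_assoc]

end BlockTransfer

section Partitions

variable {n : ℕ} {σ π : Finset (Finset (Fin n))} {W W' : Finset (Fin n)}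

lemma mem_NCPartitions : π ∈ NCPartitions n ↔ IsPartition π ∧ NoCrossing π := by
  simp [NCPartitions]

lemma IsPartition.eq_of_mem (hπ : IsPartition π) {V V' : Finset (Fin n)} (hV : V ∈ π)
    (hV' : V' ∈ π) {x : Fin n} (hxV : x ∈ V) (hxV' : x ∈ V') : V = V' := by
  obtain ⟨U, -, hU⟩ := hπ.2 x
  rw [hU V ⟨hV, hxV⟩, hU V' ⟨hV', hxV'⟩]

lemma IsPartition.subset_of_refines (hσ : IsPartition σ) (hle : ∀ V ∈ π, ∃ W ∈ σ, V ⊆ W)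
    {V : Finset (Fin n)} (hV : V ∈ π) (hW : W ∈ σ) {x : Fin n} (hxV : x ∈ V) (hxW : x ∈ W) :
    V ⊆ W := by
  obtain ⟨U, hU, hVU⟩ := hle V hV
  rwa [← hσ.eq_of_mem hU hW (hVU hxV) hxW]

lemma IsPartition.eq_of_liftBlock_subset (hσ : IsPartition σ) (hW : W ∈ σ) (hW' : W' ∈ σ)
    {B : Finset (Fin W.card)} (hB : B.Nonempty) (h : liftBlock W B ⊆ W') : W = W' := by
  obtain ⟨i, hi⟩ := hB
  have hiB := orderEmbOfFin_mem_liftBlock.2 hi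
  exact hσ.eq_of_mem hW hW' (liftBlock_subset B hiB) (h hiB)

variable {p : ∀ W ∈ σ, Finset (Finset (Fin W.card))}

lemma liftPartitions_refines : ∀ V ∈ liftPartitions σ p, ∃ W ∈ σ, V ⊆ W := by
  intro V hV
  obtain ⟨W, hW, B, -, rfl⟩ := mem_liftPartitions.1 hV
  exact ⟨W, hW, liftBlock_subset B⟩

lemma isPartition_liftPartitions (hσ : IsPartition σ) (hp : ∀ W hW, IsPartition (p W hW)) :
    IsPartition (liftPartitions σ p) := by
  refine ⟨fun V hV => ?_, fun x => ?_⟩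
  · obtain ⟨W, hW, B, hB, rfl⟩ := mem_liftPartitions.1 hV
    exact ((hp W hW).1 B hB).map
  obtain ⟨W, ⟨hW, hxW⟩, -⟩ := hσ.2 x
  obtain ⟨i, rfl⟩ := exists_orderEmbOfFin_eq hxW
  obtain ⟨B, ⟨hB, hiB⟩, hBu⟩ := (hp W hW).2 i
  refine ⟨liftBlock W B, ⟨mem_liftPartitions.2 ⟨W, hW, B, hB, rfl⟩,
    orderEmbOfFin_mem_liftBlock.2 hiB⟩, ?_⟩
  rintro V ⟨hV, hiV⟩
  obtain ⟨W', hW', B', hB', rfl⟩ := mem_liftPartitions.1 hV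
  obtain rfl : W' = W := hσ.eq_of_mem hW' hW (liftBlock_subset B' hiV) (orderEmbOfFin_mem W rfl i)
  rw [hBu B' ⟨hB', orderEmbOfFin_mem_liftBlock.1 hiV⟩]

lemma noCrossing_liftPartitions (hσP : IsPartition σ) (hσN : NoCrossing σ)
    (hp : ∀ W hW, NoCrossing (p W hW)) : NoCrossing (liftPartitions σ p) := by
  rintro ⟨p1, q1, p2, q2, h12, h23, h34, ⟨V, hV, hp1, hp2⟩, ⟨V', hV', hq1, hq2⟩, hsep⟩
  obtain ⟨W, hW, B, hB, rfl⟩ := mem_liftPartitions.1 hV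
  obtain ⟨W', hW', B', hB', rfl⟩ := mem_liftPartitions.1 hV'
  by_cases hWW' : W = W'
  · subst hWW'
    obtain ⟨x1, hx1, rfl⟩ := mem_liftBlock.1 hp1
    obtain ⟨x2, hx2, rfl⟩ := mem_liftBlock.1 hp2
    obtain ⟨y1, hy1, rfl⟩ := mem_liftBlock.1 hq1
    obtain ⟨y2, hy2, rfl⟩ := mem_liftBlock.1 hq2
    simp only [OrderEmbedding.lt_iff_lt] at h12 h23 h34
    refine hp W hW ⟨x1, y1, x2, y2, h12, h23, h34, ⟨B, hB, hx1, hx2⟩, ⟨B', hB', hy1, hy2⟩, ?_⟩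
    rintro ⟨C, hC, hxC, hyC⟩
    exact hsep ⟨liftBlock W C, mem_liftPartitions.2 ⟨W, hW, C, hC, rfl⟩,
      orderEmbOfFin_mem_liftBlock.2 hxC, orderEmbOfFin_mem_liftBlock.2 hyC⟩
  · refine hσN ⟨p1, q1, p2, q2, h12, h23, h34,
      ⟨W, hW, liftBlock_subset B hp1, liftBlock_subset B hp2⟩,
      ⟨W', hW', liftBlock_subset B' hq1, liftBlock_subset B' hq2⟩, ?_⟩
    rintro ⟨U, hU, hpU, hqU⟩
    exact hWW' ((hσP.eq_of_mem hW hU (liftBlock_subset B hp1) hpU).trans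
      (hσP.eq_of_mem hU hW' hqU (liftBlock_subset B' hq1)))

lemma liftPartitions_mem_NCPartitions (hσ : σ ∈ NCPartitions n)
    (hp : ∀ W hW, p W hW ∈ NCPartitions W.card) : liftPartitions σ p ∈ NCPartitions n := by
  obtain ⟨hσP, hσN⟩ := mem_NCPartitions.1 hσ
  simp only [mem_NCPartitions] at hp ⊢
  exact ⟨isPartition_liftPartitions hσP fun W hW => (hp W hW).1,
    noCrossing_liftPartitions hσP hσN fun W hW => (hp W hW).2⟩

lemma isPartition_restrictPartition (hσ : IsPartition σ) (hπ : IsPartition π)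
    (hle : ∀ V ∈ π, ∃ W ∈ σ, V ⊆ W) (hW : W ∈ σ) : IsPartition (restrictPartition W π) := by
  refine ⟨fun B hB => ?_, fun i => ?_⟩
  · obtain ⟨V, hV, hVW, rfl⟩ := mem_restrictPartition.1 hB
    obtain ⟨x, hx⟩ := hπ.1 V hV
    obtain ⟨i, rfl⟩ := exists_orderEmbOfFin_eq (hVW hx)
    exact ⟨i, mem_restrictBlock.2 hx⟩
  obtain ⟨V, ⟨hV, hiV⟩, hVu⟩ := hπ.2 (W.orderEmbOfFin rfl i)
  have hVW := hσ.subset_of_refines hle hV hW hiV (orderEmbOfFin_mem W rfl i)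
  refine ⟨restrictBlock W V, ⟨mem_restrictPartition.2 ⟨V, hV, hVW, rfl⟩,
    mem_restrictBlock.2 hiV⟩, ?_⟩
  rintro B ⟨hB, hiB⟩
  obtain ⟨V', hV', -, rfl⟩ := mem_restrictPartition.1 hB
  rw [hVu V' ⟨hV', mem_restrictBlock.1 hiB⟩]

lemma noCrossing_restrictPartition (hπP : IsPartition π) (hπN : NoCrossing π) :
    NoCrossing (restrictPartition W π) := by
  rintro ⟨x1, y1, x2, y2, h12, h23, h34, ⟨B, hB, hx1, hx2⟩, ⟨B', hB', hy1, hy2⟩, hsep⟩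
  obtain ⟨V, hV, hVW, rfl⟩ := mem_restrictPartition.1 hB
  obtain ⟨V', hV', -, rfl⟩ := mem_restrictPartition.1 hB'
  have hmono := (W.orderEmbOfFin rfl).strictMono
  refine hπN ⟨_, _, _, _, hmono h12, hmono h23, hmono h34,
    ⟨V, hV, mem_restrictBlock.1 hx1, mem_restrictBlock.1 hx2⟩,
    ⟨V', hV', mem_restrictBlock.1 hy1, mem_restrictBlock.1 hy2⟩, ?_⟩
  rintro ⟨U, hU, hxU, hyU⟩
  obtain rfl : U = V := hπP.eq_of_mem hU hV hxU (mem_restrictBlock.1 hx1)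
  exact hsep ⟨restrictBlock W U, mem_restrictPartition.2 ⟨U, hU, hVW, rfl⟩,
    mem_restrictBlock.2 hxU, mem_restrictBlock.2 hyU⟩

lemma restrictPartition_mem_NCPartitions (hσ : IsPartition σ) (hπ : π ∈ NCPartitions n)
    (hle : ∀ V ∈ π, ∃ W ∈ σ, V ⊆ W) (hW : W ∈ σ) :
    restrictPartition W π ∈ NCPartitions W.card := by
  obtain ⟨hπP, hπN⟩ := mem_NCPartitions.1 hπ
  exact mem_NCPartitions.2 ⟨isPartition_restrictPartition hσ hπP hle hW,
    noCrossing_restrictPartition hπP hπN⟩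

lemma restrictPartition_liftPartitions (hσ : IsPartition σ)
    (hp : ∀ W hW, ∀ B ∈ p W hW, B.Nonempty) (hW : W ∈ σ) :
    restrictPartition W (liftPartitions σ p) = p W hW := by
  ext B
  rw [mem_restrictPartition]
  constructor
  · rintro ⟨V, hV, hVW, rfl⟩
    obtain ⟨W', hW', B', hB', rfl⟩ := mem_liftPartitions.1 hV
    obtain rfl := hσ.eq_of_liftBlock_subset hW' hW (hp W' hW' B' hB') hVW
    rwa [restrictBlock_liftBlock]
  · intro hB
    exact ⟨liftBlock W B, mem_liftPartitions.2 ⟨W, hW, B, hB, rfl⟩, liftBlock_subset B,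
      restrictBlock_liftBlock B⟩

lemma liftPartitions_restrictPartition (hle : ∀ V ∈ π, ∃ W ∈ σ, V ⊆ W) :
    liftPartitions σ (fun W _ => restrictPartition W π) = π := by
  ext V
  rw [mem_liftPartitions]
  constructor
  · rintro ⟨W, -, B, hB, rfl⟩
    obtain ⟨V, hV, hVW, rfl⟩ := mem_restrictPartition.1 hB
    rwa [liftBlock_restrictBlock hVW]
  · intro hV
    obtain ⟨W, hW, hVW⟩ := hle V hV
    exact ⟨W, hW, restrictBlock W V, mem_restrictPartition.2 ⟨V, hV, hVW, rfl⟩,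
      liftBlock_restrictBlock hVW⟩

lemma cumProd_liftPartitions {A : Type*} [Ring A] (k : ∀ m : ℕ, (Fin m → A) → ℂ)
    (a : Fin n → A) (hσ : IsPartition σ) (hp : ∀ W hW, ∀ B ∈ p W hW, B.Nonempty) :
    cumProd k (liftPartitions σ p) a =
      ∏ W ∈ σ.attach, cumProd k (p W.1 W.2) (fun i => a (W.1.orderEmbOfFin rfl i)) := by
  have hdisj : (σ.attach : Set {W // W ∈ σ}).PairwiseDisjoint
      fun W => (p W.1 W.2).image (liftBlock W.1) := by
    rintro W - W' - hWW'
    refine disjoint_left.2 fun V hV hV' => hWW' (Subtype.ext ?_)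
    obtain ⟨B, hB, rfl⟩ := mem_image.1 hV
    obtain ⟨B', -, hBB'⟩ := mem_image.1 hV'
    exact hσ.eq_of_liftBlock_subset W.2 W'.2 (hp W.1 W.2 B hB) (hBB' ▸ liftBlock_subset B')
  rw [cumProd, liftPartitions, prod_biUnion hdisj]
  refine prod_congr rfl fun W _ => ?_
  rw [prod_image fun B _ B' _ h => liftBlock_injective h]
  exact prod_congr rfl fun B _ => apply_liftBlock k a B

end Partitions

theorem momProd_eq_sum_cumProd_general {A : Type*} [Ring A] [Algebra ℂ A]
    (φ : A →ₗ[ℂ] ℂ)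
    (k : ∀ n : ℕ, (Fin n → A) → ℂ) (hk : MomentCumulant φ k)
    (n : ℕ) (σ : Finset (Finset (Fin n))) (hσ : σ ∈ NCPartitions n)
    (a : Fin n → A) :
    momProd φ σ a =
      ∑ π ∈ (NCPartitions n).filter (fun π => ∀ V ∈ π, ∃ W ∈ σ, V ⊆ W),
        cumProd k π a := by
  have hσP := (mem_NCPartitions.1 hσ).1
  have nonempty_of_mem_pi {p} (hp : p ∈ σ.pi fun W => NCPartitions W.card) :
      ∀ W hW, ∀ B ∈ p W hW, B.Nonempty :=
    fun W hW => (mem_NCPartitions.1 (mem_pi.1 hp W hW)).1.1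
  calc momProd φ σ a
      = ∏ W ∈ σ, ∑ ρ ∈ NCPartitions W.card, cumProd k ρ fun i => a (W.orderEmbOfFin rfl i) :=
        prod_congr rfl fun W _ => hk W.card _
    _ = ∑ p ∈ σ.pi fun W => NCPartitions W.card,
          ∏ W ∈ σ.attach, cumProd k (p W.1 W.2) fun i => a (W.1.orderEmbOfFin rfl i) :=
        prod_sum _ _ _
    _ = _ := by
      refine sum_nbij' (fun p => liftPartitions σ p) (fun π W _ => restrictPartition W π)
        (fun p hp => ?_) (fun π hπ => ?_) (fun p hp => ?_) (fun π hπ => ?_) (fun p hp => ?_)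
      · exact mem_filter.2 ⟨liftPartitions_mem_NCPartitions hσ (mem_pi.1 hp),
          liftPartitions_refines⟩
      · exact mem_pi.2 fun W hW =>
          restrictPartition_mem_NCPartitions hσP (mem_filter.1 hπ).1 (mem_filter.1 hπ).2 hW
      · exact funext₂ fun W hW => restrictPartition_liftPartitions hσP (nonempty_of_mem_pi hp) hW
      · exact liftPartitions_restrictPartition (mem_filter.1 hπ).2
      · exact (cumProd_liftPartitions k a hσP (nonempty_of_mem_pi hp)).symm

/-- For any non-crossing partition σ, the σ-moment equals the sum of cumulant products
over all non-crossing partitions refining σ. -/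
theorem momProd_eq_sum_cumProd {A : Type*} [Ring A] [Algebra ℂ A]
    (φ : A →ₗ[ℂ] ℂ) (hφ : φ 1 = 1)
    (k : ∀ n : ℕ, (Fin n → A) → ℂ) (hk : MomentCumulant φ k)
    (n : ℕ) (σ : Finset (Finset (Fin n))) (hσ : σ ∈ NCPartitions n)
    (a : Fin n → A) :
    momProd φ σ a =
      ∑ π ∈ (NCPartitions n).filter (fun π => ∀ V ∈ π, ∃ W ∈ σ, V ⊆ W),
        cumProd k π a :=
  momProd_eq_sum_cumProd_general φ k hk n σ hσ a
end
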